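/- arXiv:1308.5325 — 10 statements merged into one kernel-verified Lean document; each statement's English description precedes it below -/
import Mathlib

section
/- A configuration f on the complete graph K_n is toppling equivalent to the zero configuration if and only if the sum of its entries is 0 and all entries are pairwise congruent modulo n. -/
/-- Laplacian configuration of the complete graph `K n`: value `n-1` at `i`, `-1` elsewhere. -/
def lapK (n : ℕ) (i : Fin n) : Fin n → ℤ := fun j => if j = i then (n : ℤ) - 1 else -1

/-- Toppling equivalence on `K n`. -/
def topK (n : ℕ) (f g : Fin n → ℤ) : Prop :=
  ∃ a : Fin n → ℤ, f - g = ∑ i, a i • lapK n i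

lemma lapK_sum_eval (n : ℕ) (a : Fin n → ℤ) (j : Fin n) :
    (∑ i, a i • lapK n i) j = n * a j - ∑ i, a i := by
  simp only [Finset.sum_apply, Pi.smul_apply, lapK, smul_eq_mul]
  have h : ∀ i ∈ Finset.univ, a i * (if j = i then (n : ℤ) - 1 else -1)
      = (if j = i then a i * n else 0) - a i := by
    intro i _
    split_ifs <;> ring
  rw [Finset.sum_congr rfl h, Finset.sum_sub_distrib, Finset.sum_ite_eq]
  simp [mul_comm]

theorem stmt0 (n : ℕ) (hn : 2 ≤ n) (f : Fin n → ℤ) :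
    topK n f 0 ↔ ((∑ i, f i) = 0 ∧ ∀ i j : Fin n, f i ≡ f j [ZMOD (n : ℤ)]) := by
  have hn0 : (0:ℤ) < (n:ℤ) := by exact_mod_cast Nat.lt_of_lt_of_le Nat.zero_lt_two hn
  constructor
  · rintro ⟨a, ha⟩
    have hf : ∀ j, f j = n * a j - ∑ i, a i := by
      intro j
      have h := congrFun ha j
      rwa [Pi.sub_apply, Pi.zero_apply, sub_zero, lapK_sum_eval] at h
    constructor
    · have : (∑ j, f j) = ∑ j : Fin n, ((n:ℤ) * a j - ∑ i, a i) :=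
        Finset.sum_congr rfl (fun j _ => hf j)
      rw [this, Finset.sum_sub_distrib, ← Finset.mul_sum]
      simp [mul_comm]
    · intro i j
      have hij : f i - f j = (n:ℤ) * (a i - a j) := by rw [hf i, hf j]; ring
      exact Int.ModEq.symm (Int.modEq_iff_dvd.mpr ⟨a i - a j, by linarith⟩)
  · rintro ⟨hsum, hcong⟩
    have i0 : Fin n := ⟨0, by omega⟩
    set a : Fin n → ℤ := fun j => (f j - f i0) / n with ha
    have hdvd : ∀ j, (n:ℤ) ∣ (f j - f i0) := fun j => Int.ModEq.dvd (hcong i0 j)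
    have hkey : ∀ j, (n:ℤ) * a j = f j - f i0 := fun j => Int.mul_ediv_cancel' (hdvd j)
    have hS : (n:ℤ) * (∑ i, a i) = (n:ℤ) * (- f i0) := by
      rw [Finset.mul_sum]
      have h2 : ∑ i, (n:ℤ) * a i = ∑ i, (f i - f i0) :=
        Finset.sum_congr rfl (fun i _ => hkey i)
      rw [h2, Finset.sum_sub_distrib, hsum]
      simp [mul_comm]
    have hS' : (∑ i, a i) = - f i0 := mul_left_cancel₀ (ne_of_gt hn0) hS
    refine ⟨a, ?_⟩
    funext j
    simp only [Pi.sub_apply, Pi.zero_apply, sub_zero, lapK_sum_eval, hS']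
    have := hkey j
    linarith
end

section
/- Every toppling-equivalence class of configurations on K_n contains exactly n configurations f satisfying 0 <= f_i < n for all i < n. -/
open Finset

variable {n : ℕ}

theorem sum_smul_lapK_apply (a : Fin n → ℤ) (j : Fin n) :
    (∑ i, a i • lapK n i) j = n * a j - ∑ i, a i := by
  have lapK_apply (i : Fin n) : lapK n i j = (if j = i then (n : ℤ) else 0) - 1 := by
    unfold lapK; split_ifs <;> ring
  simp only [Finset.sum_apply, Pi.smul_apply, smul_eq_mul, lapK_apply, mul_sub, mul_one, mul_ite,
    mul_zero, sum_sub_distrib, sum_ite_eq, mem_univ, if_true]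
  ring

theorem topK_iff [NeZero n] {f g : Fin n → ℤ} :
    topK n f g ↔ ∑ i, f i = ∑ i, g i ∧ ∃ c : ZMod n, ∀ i, ((f i - g i : ℤ) : ZMod n) = c := by
  simp only [topK, funext_iff, Pi.sub_apply, sum_smul_lapK_apply]
  constructor
  · rintro ⟨a, ha⟩
    refine ⟨?_, -(∑ i, a i : ℤ), fun i => by simp [ha i]⟩
    have h := Finset.sum_congr rfl fun j (_ : j ∈ univ) => ha j
    simp only [sum_sub_distrib, ← mul_sum, sum_const, card_univ, Fintype.card_fin,
      nsmul_eq_mul, sub_self] at h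
    exact sub_eq_zero.1 h
  · rintro ⟨hsum, c, hc⟩
    have hdvd (i : Fin n) : (n : ℤ) ∣ f i - g i - c.val :=
      (ZMod.intCast_zmod_eq_zero_iff_dvd _ _).1 (by rw [Int.cast_sub, hc i]; simp)
    choose a ha using hdvd
    have hsum_a : ∑ i, a i = -c.val := by
      have h := Finset.sum_congr rfl fun j (_ : j ∈ univ) => ha j
      simp only [sum_sub_distrib, ← mul_sum, sum_const, card_univ, Fintype.card_fin,
        nsmul_eq_mul, hsum, sub_self] at h
      exact mul_left_cancel₀ (NeZero.ne (n : ℤ)) (by linarith)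
    exact ⟨a, fun j => by rw [hsum_a]; linarith [ha j]⟩

theorem Fintype.eq_of_sum_eq_of_forall_ne {ι M : Type*} [Fintype ι] [DecidableEq ι]
    [AddCancelCommMonoid M] {g h : ι → M} (L : ι) (hsum : ∑ i, g i = ∑ i, h i)
    (hne : ∀ i, i ≠ L → g i = h i) : g = h := by
  funext i
  rcases eq_or_ne i L with rfl | hi
  · rw [Fintype.sum_eq_add_sum_compl i g, Fintype.sum_eq_add_sum_compl i h,
      Finset.sum_congr rfl fun j hj => hne j (by simpa using hj)] at hsum
    exact add_right_cancel hsum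
  · exact hne i hi

def reduceMod (f : Fin n → ℤ) (c : ZMod n) (i : Fin n) : ℤ := ((f i - c : ZMod n).val : ℤ)

/-- The site `L` absorbs the chips removed by the reduction, so the total stays that of `f`. -/
def normalForm (f : Fin n → ℤ) (L : Fin n) (c : ZMod n) : Fin n → ℤ :=
  reduceMod f c + Pi.single L (∑ i, (f i - reduceMod f c i))

section normalForm

variable {f g : Fin n → ℤ} {L : Fin n}

theorem normalForm_of_ne (c : ZMod n) {i : Fin n} (hi : i ≠ L) :
    normalForm f L c i = reduceMod f c i := by
  simp [normalForm, Pi.single_eq_of_ne hi]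

theorem sum_normalForm (f : Fin n → ℤ) (L : Fin n) (c : ZMod n) :
    ∑ i, normalForm f L c i = ∑ i, f i := by
  simp [normalForm, sum_add_distrib, sum_sub_distrib]

variable [NeZero n]

theorem cast_reduceMod (f : Fin n → ℤ) (c : ZMod n) (i : Fin n) :
    ((reduceMod f c i : ℤ) : ZMod n) = f i - c := by
  simp [reduceMod]

theorem cast_sub_normalForm (f : Fin n → ℤ) (L : Fin n) (c : ZMod n) (i : Fin n) :
    ((f i - normalForm f L c i : ℤ) : ZMod n) = c := by
  rcases eq_or_ne i L with rfl | hi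
  · simp [normalForm, cast_reduceMod]
  · simp [normalForm_of_ne c hi, cast_reduceMod]

theorem topK_normalForm (f : Fin n → ℤ) (L : Fin n) (c : ZMod n) :
    topK n f (normalForm f L c) :=
  topK_iff.2 ⟨(sum_normalForm f L c).symm, c, cast_sub_normalForm f L c⟩

theorem normalForm_injective (f : Fin n → ℤ) (L : Fin n) : Function.Injective (normalForm f L) :=
  fun c c' h => by rw [← cast_sub_normalForm f L c L, h, cast_sub_normalForm]

theorem eq_normalForm_of_topK (hg : topK n f g) (hb : ∀ i, i ≠ L → 0 ≤ g i ∧ g i < n) :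
    g = normalForm f L ((f L - g L : ℤ) : ZMod n) := by
  obtain ⟨hsum, c, hc⟩ := topK_iff.1 hg
  rw [hc L]
  refine Fintype.eq_of_sum_eq_of_forall_ne L (by rw [sum_normalForm, hsum]) fun i hi => ?_
  have hgi : (f i : ZMod n) - c = g i := by rw [← hc i]; push_cast; ring
  rw [normalForm_of_ne c hi, reduceMod, hgi, ZMod.val_intCast,
    Int.emod_eq_of_lt (hb i hi).1 (hb i hi).2]

theorem setOf_topK_eq_range_normalForm (f : Fin n → ℤ) (L : Fin n) :
    {g | topK n f g ∧ ∀ i, i ≠ L → 0 ≤ g i ∧ g i < n} = Set.range (normalForm f L) := by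
  ext g
  constructor
  · rintro ⟨hg, hb⟩
    exact ⟨_, (eq_normalForm_of_topK hg hb).symm⟩
  · rintro ⟨c, rfl⟩
    refine ⟨topK_normalForm f L c, fun i hi => ?_⟩
    rw [normalForm_of_ne c hi, reduceMod]
    exact ⟨Int.natCast_nonneg _, Int.ofNat_lt.2 (ZMod.val_lt _)⟩

end normalForm

theorem stmt2 (n : ℕ) (hn : 2 ≤ n) (f : Fin n → ℤ) :
    Set.ncard {g : Fin n → ℤ |
      topK n f g ∧ ∀ i : Fin n, (i : ℕ) < n - 1 → 0 ≤ g i ∧ g i < n} = n := by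
  have : NeZero n := ⟨by omega⟩
  let L : Fin n := ⟨n - 1, by omega⟩
  have lt_iff_ne (i : Fin n) : (i : ℕ) < n - 1 ↔ i ≠ L := by
    simp only [Ne, Fin.ext_iff, L]; omega
  simp_rw [lt_iff_ne, setOf_topK_eq_range_normalForm, ← Set.image_univ,
    Set.ncard_image_of_injective _ (normalForm_injective f L), Set.ncard_univ, Nat.card_zmod]
end

section
/- Given any configuration f on K_n, the configuration g defined by g_i = (f_i - f_1) mod n for i < n and g_n = deg(f) - sum_{i=1}^{n-1} g_i is toppling equivalent to f and satisfies 0 <= g_i < n for all i < n. -/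
set_option maxHeartbeats 1000000 in
theorem stmt3 (n : ℕ) (hn : 2 ≤ n) (f g : Fin n → ℤ)
    (hg1 : ∀ i : Fin n, (i : ℕ) < n - 1 → g i = (f i - f ⟨0, by omega⟩) % (n : ℤ))
    (hg2 : g ⟨n - 1, by omega⟩ =
      (∑ i, f i) - ∑ i : Fin n, (if (i : ℕ) < n - 1 then g i else 0)) :
    topK n f g ∧ ∀ i : Fin n, (i : ℕ) < n - 1 → 0 ≤ g i ∧ g i < n := by
  have hn0 : (0:ℤ) < n := by exact_mod_cast Nat.lt_of_lt_of_le Nat.zero_lt_two hn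
  have hnz : (n:ℤ) ≠ 0 := ne_of_gt hn0
  set z0 : ℤ := f ⟨0, by omega⟩ with hz0
  set L : Fin n := ⟨n-1, by omega⟩ with hL
  have hsplit : ∑ i, g i = (∑ i : Fin n, (if (i:ℕ) < n - 1 then g i else 0)) + g L := by
    have h1 : ∀ i : Fin n, g i
        = (if (i:ℕ) < n-1 then g i else 0) + (if (i:ℕ) < n-1 then 0 else g i) := by
      intro i; split <;> simp
    rw [Finset.sum_congr rfl (fun i _ => h1 i), Finset.sum_add_distrib]
    congr 1
    rw [Finset.sum_eq_single L]
    · simp [hL]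
    · intro i _ hiL
      have hlt := i.isLt
      have hne : (i:ℕ) ≠ n - 1 := fun h => hiL (Fin.ext h)
      have : (i:ℕ) < n - 1 := by omega
      simp [this]
    · simp
  have hsum : ∑ i, g i = ∑ i, f i := by
    rw [hsplit, hg2]; ring
  set d : Fin n → ℤ := fun j => f j - g j - z0 with hd
  have hdvd1 : ∀ j : Fin n, (j:ℕ) < n - 1 → (n:ℤ) ∣ d j := by
    intro j hj
    have h1 : d j = (f j - z0) - (f j - z0) % n := by
      simp only [hd, hg1 j hj, ← hz0]; ring
    rw [h1, Int.emod_def]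
    exact ⟨(f j - z0) / n, by ring⟩
  have hdsum : ∑ j, d j = -((n:ℤ) * z0) := by
    simp only [hd]
    rw [Finset.sum_sub_distrib, Finset.sum_sub_distrib, hsum, Finset.sum_const,
      Finset.card_univ, Fintype.card_fin, nsmul_eq_mul]
    ring
  have hdvdL : (n:ℤ) ∣ d L := by
    have h1 : d L = (∑ j, d j) - ∑ j ∈ Finset.univ.erase L, d j := by
      rw [Finset.sum_erase_eq_sub (Finset.mem_univ L)]; ring
    rw [h1, hdsum]
    refine dvd_sub ⟨-z0, by ring⟩ (Finset.dvd_sum fun j hj => ?_)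
    have hne : j ≠ L := (Finset.mem_erase.mp hj).1
    have hlt := j.isLt
    have hne' : (j:ℕ) ≠ n - 1 := fun h => hne (Fin.ext h)
    exact hdvd1 j (by omega)
  have hdvd : ∀ j, (n:ℤ) ∣ d j := by
    intro j
    by_cases hj : (j:ℕ) < n - 1
    · exact hdvd1 j hj
    · have hlt := j.isLt
      have : j = L := Fin.ext (by simp only [hL]; omega)
      rw [this]; exact hdvdL
  set a : Fin n → ℤ := fun j => d j / n with ha
  have hna : ∀ j, (n:ℤ) * a j = d j := fun j => Int.mul_ediv_cancel' (hdvd j)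
  have hasum : ∑ j, a j = -z0 := by
    have h1 : (n:ℤ) * ∑ j, a j = (n:ℤ) * -z0 := by
      rw [Finset.mul_sum]
      simp_rw [hna]
      rw [hdsum]; ring
    exact mul_left_cancel₀ hnz h1
  constructor
  · refine ⟨a, ?_⟩
    funext j
    have hRHS : (∑ i, a i • lapK n i) j = (n:ℤ) * a j - ∑ i, a i := by
      simp only [Finset.sum_apply, Pi.smul_apply, smul_eq_mul, lapK]
      have h2 : ∀ i : Fin n, a i * (if j = i then (n:ℤ) - 1 else -1)
          = (if j = i then (n:ℤ) * a i else 0) - a i := by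
        intro i; split <;> ring
      rw [Finset.sum_congr rfl (fun i _ => h2 i), Finset.sum_sub_distrib,
        Finset.sum_ite_eq]
      simp
    rw [Pi.sub_apply, hRHS, hna, hasum]
    simp only [hd]; ring
  · intro i hi
    rw [hg1 i hi]
    exact ⟨Int.emod_nonneg _ hnz, Int.emod_lt_of_pos _ hn0⟩
end

section
/- The configuration f_{G->} associated to an acyclic orientation of a connected loopless multigraph G, defined by (f_{G->})_i = d_i^- - 1 where d_i^- is the indegree of vertex i, is not toppling equivalent to any configuration with all entries nonnegative. -/
/-- Laplacian configuration `Δ^(i)` of the multigraph given by edge-multiplicity matrix `e`. -/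
def lapG {n : ℕ} (e : Fin n → Fin n → ℕ) (i : Fin n) : Fin n → ℤ :=
  fun j => if j = i then (∑ k, (e i k : ℤ)) else -(e i j : ℤ)

/-- Toppling equivalence: `f - g` lies in the lattice generated by the `Δ^(i)`. -/
def topG {n : ℕ} (e : Fin n → Fin n → ℕ) (f g : Fin n → ℤ) : Prop :=
  ∃ a : Fin n → ℤ, f - g = ∑ i, a i • lapG e i

/-- `L_G`-effectiveness: toppling equivalent to a nonnegative configuration. -/
def effG {n : ℕ} (e : Fin n → Fin n → ℕ) (f : Fin n → ℤ) : Prop :=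
  ∃ g : Fin n → ℤ, topG e f g ∧ ∀ i, 0 ≤ g i

/-- The Baker–Norine rank:
`rankG e f + 1 = min {deg λ | λ ≥ 0, f - λ not L_G-effective}`. -/
noncomputable def rankG {n : ℕ} (e : Fin n → Fin n → ℕ) (f : Fin n → ℤ) : ℤ :=
  sInf {d : ℤ | ∃ lam : Fin n → ℤ,
    (∀ i, 0 ≤ lam i) ∧ (∑ i, lam i) = d ∧ ¬ effG e (f - lam)} - 1

/-!
Suppose `f - g = ∑ j, a j • Δ^(j)` with `g ≥ 0`. Among the vertices where `a` is maximal, the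
acyclic orientation has a source `i`. Every edge `j → i` then comes from a vertex with
`a j ≤ a i - 1`, so the `i`-th entry of `∑ j, a j • Δ^(j)` is at least the indegree of `i`.
Since `f i` is that indegree minus one, this forces `g i ≤ -1`.
-/

open Relation

theorem wellFounded_of_forall_not_transGen_self {ι : Type*} [Finite ι] {r : ι → ι → Prop}
    (h : ∀ i, ¬ TransGen r i i) : WellFounded r :=
  haveI : Std.Irrefl (TransGen r) := ⟨h⟩
  haveI : IsTrans ι (TransGen r) := ⟨fun _ _ _ => TransGen.trans⟩
  Subrelation.wf TransGen.single (Finite.wellFounded_of_trans_of_irrefl (TransGen r))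

theorem lapG_sum_apply {n : ℕ} {e : Fin n → Fin n → ℕ} (hsym : ∀ i j, e i j = e j i)
    (hloop : ∀ i, e i i = 0) (a : Fin n → ℤ) (i : Fin n) :
    (∑ j, a j • lapG e j) i = ∑ j, (a i - a j) * (e i j : ℤ) := by
  have hterm : ∀ j, a j * lapG e j i
      = (if i = j then a j * ∑ k, (e j k : ℤ) else 0) - a j * (e i j : ℤ) := by
    intro j
    by_cases h : i = j
    · subst h
      simp [lapG, hloop i]
    · simp [lapG, h, hsym j i]
  simp only [Finset.sum_apply, Pi.smul_apply, smul_eq_mul, hterm, Finset.sum_sub_distrib,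
    Finset.sum_ite_eq, Finset.mem_univ, if_true, sub_mul, Finset.mul_sum]

theorem sum_indegree_le_lapG_sum_apply {n : ℕ} {e ε : Fin n → Fin n → ℕ}
    (hor : ∀ i j, ε i j + ε j i = e i j) (hloop : ∀ i, e i i = 0) {a : Fin n → ℤ} {i : Fin n}
    (hmax : ∀ j, a j ≤ a i) (hsource : ∀ j, a j = a i → ε j i = 0) :
    ∑ j, (ε j i : ℤ) ≤ (∑ j, a j • lapG e j) i := by
  have hsym : ∀ i j, e i j = e j i := fun i j => by rw [← hor, ← hor, add_comm]
  rw [lapG_sum_apply hsym hloop]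
  refine Finset.sum_le_sum fun j _ => ?_
  rcases eq_or_ne (ε j i) 0 with hzero | hpos
  · rw [hzero, Nat.cast_zero]
    exact mul_nonneg (sub_nonneg.mpr (hmax j)) (Nat.cast_nonneg _)
  · have hgap : 1 ≤ a i - a j := by
      have := lt_of_le_of_ne (hmax j) (mt (hsource j) hpos)
      omega
    have hle : (ε j i : ℤ) ≤ e i j := by rw [← hor i j]; push_cast; omega
    nlinarith [Int.natCast_nonneg (e i j)]

theorem stmt7_general (n : ℕ) (hn : 1 ≤ n) (e : Fin n → Fin n → ℕ)
    (ε : Fin n → Fin n → ℕ) (hor : ∀ i j, ε i j + ε j i = e i j)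
    (hacyc : ∀ i : Fin n, ¬ Relation.TransGen (fun a b => 0 < ε a b) i i) :
    ¬ effG e (fun i => (∑ j, (ε j i : ℤ)) - 1) := by
  rintro ⟨g, ⟨a, ha⟩, hg⟩
  have hloop : ∀ i, e i i = 0 := fun i => by
    have : ε i i = 0 := Nat.eq_zero_of_not_pos fun h => hacyc i (TransGen.single h)
    rw [← hor, this]
  obtain ⟨i₀, -, hmax₀⟩ := Finset.univ.exists_max_image a ⟨⟨0, hn⟩, Finset.mem_univ _⟩
  obtain ⟨i, hi, hsource⟩ :=
    (wellFounded_of_forall_not_transGen_self hacyc).has_min {x | a x = a i₀} ⟨i₀, rfl⟩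
  have hmax : ∀ j, a j ≤ a i := fun j => (hmax₀ j (Finset.mem_univ j)).trans_eq hi.symm
  have hbound := sum_indegree_le_lapG_sum_apply hor hloop hmax fun j hj =>
    Nat.eq_zero_of_not_pos (hsource j (hj.trans hi))
  have hval := congrFun ha i
  simp only [Pi.sub_apply] at hval
  linarith [hg i]

theorem stmt7 (n : ℕ) (hn : 1 ≤ n) (e : Fin n → Fin n → ℕ)
    (hsym : ∀ i j, e i j = e j i) (hloop : ∀ i, e i i = 0)
    (hconn : ∀ i j : Fin n, Relation.ReflTransGen (fun a b => 0 < e a b) i j)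
    (ε : Fin n → Fin n → ℕ) (hor : ∀ i j, ε i j + ε j i = e i j)
    (hacyc : ∀ i : Fin n, ¬ Relation.TransGen (fun a b => 0 < ε a b) i i) :
    ¬ effG e (fun i => (∑ j, (ε j i : ℤ)) - 1) :=
  stmt7_general n hn e ε hor hacyc
end

section
/- For any configuration f on a connected loopless multigraph G, exactly one of the following holds: (1) f is L_G-effective, or (2) there exists an acyclic orientation G-> of G such that f_{G->} - f is L_G-effective. -/
/-!
If both alternatives held, `ν := indeg_ε - 1` would be effective, say `ν - E = Δ c` with `E ≥ 0`.
At a vertex `v` where `c` is maximal and which is an `ε`-source among the maximal vertices,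
`(Δ c)(v) ≥ indeg_ε v > ν v`, a contradiction.

If `f` is not effective, pick `q` with `f q < 0` and the `q`-reduced configuration `g ~ f`
(obtained by maximizing the total of a firing script normalized at `q`; there are finitely many
candidates because a harmonic script is constant). Then `g q < 0`, and Dhar's burning algorithm
started at `q` burns every vertex holding fewer chips than edges to the burnt part.
Orienting each edge from its earlier burnt end to its later one gives an acyclic `ε` with
`g < indeg_ε`, so `ν - f ~ ν - g ≥ 0`.
-/

open Finset Relation

section Orientation

variable {α : Type*}

lemma exists_burning_order [Fintype α] [DecidableEq α] (e : α → α → ℕ) (g : α → ℤ)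
    (h : ∀ S : Finset α, S.Nonempty → ∃ v ∈ S, g v < ∑ k ∈ Sᶜ, (e v k : ℤ)) :
    ∃ t : α → ℕ, Function.Injective t ∧ ∀ v, g v < ∑ k with t k < t v, (e v k : ℤ) := by
  -- `S` is the part not yet burnt, `t` orders the burning of `S`
  have hburn : ∀ S : Finset α, ∃ t : α → ℕ, Set.InjOn t S ∧
      ∀ v ∈ S, g v < ∑ k with k ∉ S ∨ t k < t v, (e v k : ℤ) := by
    intro S
    induction S using Finset.strongInduction with
    | H S ih =>
      rcases S.eq_empty_or_nonempty with rfl | hS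
      · exact ⟨fun _ => 0, by simp, by simp⟩
      obtain ⟨v, hvS, hv⟩ := h S hS
      obtain ⟨t, ht, hlt⟩ := ih (S.erase v) (erase_ssubset hvS)
      refine ⟨fun k => if k = v then 0 else t k + 1, fun x hx y hy hxy => ?_, fun u hu => ?_⟩
      · by_cases hxv : x = v <;> by_cases hyv : y = v
        · rw [hxv, hyv]
        · simp [hxv, hyv] at hxy
        · simp [hxv, hyv] at hxy
        · simp only [hxv, hyv, if_false, add_left_inj] at hxy
          exact ht (mem_erase.mpr ⟨hxv, hx⟩) (mem_erase.mpr ⟨hyv, hy⟩) hxy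
      · by_cases huv : u = v
        · subst huv
          convert hv using 2
          ext k
          simp
        · convert hlt u (mem_erase.mpr ⟨huv, hu⟩) using 2
          ext k
          by_cases hkv : k = v <;> simp [hkv, huv]
  obtain ⟨t, ht, hlt⟩ := hburn univ
  exact ⟨t, Set.injOn_univ.mp (by simpa using ht), fun v => by
    simpa using hlt v (mem_univ v)⟩

def orientAlong (t : α → ℕ) (e : α → α → ℕ) (i j : α) : ℕ :=
  if t i < t j then e i j else 0

lemma orientAlong_add_swap {t : α → ℕ} (ht : Function.Injective t) {e : α → α → ℕ}
    (hsym : ∀ i j, e i j = e j i) (hloop : ∀ i, e i i = 0) (i j : α) :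
    orientAlong t e i j + orientAlong t e j i = e i j := by
  rcases lt_trichotomy (t i) (t j) with h | h | h
  · simp [orientAlong, h, h.not_gt]
  · simp [ht h, orientAlong, hloop]
  · simp [orientAlong, h, h.not_gt, hsym i j]

lemma lt_of_transGen_orientAlong {t : α → ℕ} {e : α → α → ℕ} {i j : α}
    (h : TransGen (fun a b => 0 < orientAlong t e a b) i j) : t i < t j := by
  have hstep : ∀ a b, 0 < orientAlong t e a b → t a < t b := fun a b hab => by
    by_contra hlt
    simp [orientAlong, hlt] at hab
  induction h with
  | single hab => exact hstep _ _ hab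
  | tail _ hbc ih => exact ih.trans (hstep _ _ hbc)

lemma sum_orientAlong [Fintype α] (t : α → ℕ) {e : α → α → ℕ} (hsym : ∀ i j, e i j = e j i)
    (i : α) : ∑ j, (orientAlong t e j i : ℤ) = ∑ j with t j < t i, (e i j : ℤ) := by
  rw [sum_filter]
  exact sum_congr rfl fun j _ => by by_cases h : t j < t i <;> simp [orientAlong, h, hsym j i]

lemma exists_minimal_of_acyclic [Finite α] {r : α → α → Prop} (hr : ∀ a, ¬ TransGen r a a)
    {S : Set α} (hS : S.Nonempty) : ∃ v ∈ S, ∀ w ∈ S, ¬ r w v := by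
  have : IsTrans α (TransGen r) := ⟨fun _ _ _ => TransGen.trans⟩
  have : Std.Irrefl (TransGen r) := ⟨hr⟩
  obtain ⟨v, hv, hmin⟩ := (Finite.wellFounded_of_trans_of_irrefl (TransGen r)).has_min S hS
  exact ⟨v, hv, fun w hw hwv => hmin w hw (TransGen.single hwv)⟩

end Orientation

section Laplacian

variable {n : ℕ}

-- `f - laplacian e a` is `f` after every vertex `i` has fired `a i` times.
def laplacian (e : Fin n → Fin n → ℕ) : (Fin n → ℤ) →ₗ[ℤ] Fin n → ℤ :=
  Fintype.linearCombination ℤ (lapG e)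

lemma laplacian_apply {e : Fin n → Fin n → ℕ} (hsym : ∀ i j, e i j = e j i)
    (hloop : ∀ i, e i i = 0) (a : Fin n → ℤ) (j : Fin n) :
    laplacian e a j = ∑ k, (a j - a k) * e j k := by
  have hterm : ∀ i, a i * lapG e i j = (if i = j then a j * ∑ k, (e j k : ℤ) else 0)
      - a i * e j i := by
    intro i
    by_cases h : i = j
    · subst h; simp [lapG, hloop]
    · simp [lapG, Ne.symm h, h, hsym i j]
  simp only [laplacian, Fintype.linearCombination_apply, Finset.sum_apply, Pi.smul_apply,
    smul_eq_mul, hterm, sum_sub_distrib, sum_ite_eq', mem_univ, if_true, sub_mul, mul_sum]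

lemma laplacian_single (e : Fin n → Fin n → ℕ) (i : Fin n) :
    laplacian e (Pi.single i 1) = lapG e i := by
  simp [laplacian]

lemma sum_laplacian {e : Fin n → Fin n → ℕ} (hsym : ∀ i j, e i j = e j i)
    (hloop : ∀ i, e i i = 0) (a : Fin n → ℤ) : ∑ j, laplacian e a j = 0 := by
  simp only [laplacian_apply hsym hloop, sub_mul, sum_sub_distrib, sub_eq_zero]
  rw [sum_comm]
  simp only [hsym]

lemma laplacian_const {e : Fin n → Fin n → ℕ} (hsym : ∀ i j, e i j = e j i)
    (hloop : ∀ i, e i i = 0) (c : ℤ) : laplacian e (fun _ => c) = 0 := by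
  ext j
  simp [laplacian_apply hsym hloop]

lemma eq_of_laplacian_eq_zero {e : Fin n → Fin n → ℕ} (hsym : ∀ i j, e i j = e j i)
    (hloop : ∀ i, e i i = 0) (hconn : ∀ i j, ReflTransGen (fun a b => 0 < e a b) i j)
    {a : Fin n → ℤ} (ha : laplacian e a = 0) (i j : Fin n) : a i = a j := by
  have hne : (univ : Finset (Fin n)).Nonempty := ⟨i, mem_univ i⟩
  obtain ⟨m, -, hm⟩ := exists_max_image univ a hne
  have hmax : ∀ k, a k = a m := by
    intro k
    induction hconn m k with
    | refl => rfl
    | @tail b c _ hbc ih =>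
      have hterms := (sum_eq_zero_iff_of_nonneg fun k _ =>
        mul_nonneg (sub_nonneg.mpr (ih ▸ hm k (mem_univ k))) (Nat.cast_nonneg (e b k))).mp
        ((laplacian_apply hsym hloop a b).symm.trans (congrFun ha b)) c (mem_univ c)
      have : (e b c : ℤ) ≠ 0 := by exact_mod_cast hbc.ne'
      have := (mul_eq_zero.mp hterms).resolve_right this
      linarith
  rw [hmax i, hmax j]

lemma laplacian_indicator_of_mem {e : Fin n → Fin n → ℕ} (hsym : ∀ i j, e i j = e j i)
    (hloop : ∀ i, e i i = 0) {S : Finset (Fin n)} {v : Fin n} (hv : v ∈ S) :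
    laplacian e (fun i => if i ∈ S then 1 else 0) v = ∑ k ∈ Sᶜ, (e v k : ℤ) := by
  rw [laplacian_apply hsym hloop, ← sum_compl_add_sum S,
    sum_eq_zero (s := S) fun k hk => by simp [hv, hk], add_zero]
  exact sum_congr rfl fun k hk => by simp [hv, mem_compl.mp hk]

lemma laplacian_indicator_nonpos {e : Fin n → Fin n → ℕ} (hsym : ∀ i j, e i j = e j i)
    (hloop : ∀ i, e i i = 0) {S : Finset (Fin n)} {v : Fin n} (hv : v ∉ S) :
    laplacian e (fun i => if i ∈ S then 1 else 0) v ≤ 0 := by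
  rw [laplacian_apply hsym hloop]
  refine sum_nonpos fun k _ => mul_nonpos_of_nonpos_of_nonneg ?_ (Nat.cast_nonneg _)
  split_ifs <;> simp

lemma exists_laplacian_nonneg_off_pos_at {e : Fin n → Fin n → ℕ} (hloop : ∀ i, e i i = 0)
    {q w : Fin n} (hqw : ReflTransGen (fun a b => 0 < e a b) q w) (hw : w ≠ q) :
    ∃ a, (∀ i ≠ q, 0 ≤ laplacian e a i) ∧ 0 < laplacian e a w := by
  induction hqw with
  | refl => exact absurd rfl hw
  | @tail b c _ hbc ih =>
    have hcb : c ≠ b := by rintro rfl; simp [hloop] at hbc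
    by_cases hb : b = q
    · subst hb
      refine ⟨-Pi.single b 1, fun i hi => ?_, ?_⟩
      · simp [laplacian_single, lapG, hi]
      · simpa [laplacian_single, lapG, hcb] using hbc
    -- reverse-firing `b` feeds `c`; `d = deg b` copies of the script for `b` cover the loss at `b`
    obtain ⟨a, ha, hab⟩ := ih hb
    set d := ∑ k, (e b k : ℤ)
    have hd : 0 ≤ d := by positivity
    have hL : ∀ i, laplacian e (d • a - Pi.single b 1) i = d * laplacian e a i - lapG e b i := by
      simp only [map_sub, map_smul, laplacian_single, Pi.sub_apply, Pi.smul_apply, smul_eq_mul,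
        implies_true]
    refine ⟨d • a - Pi.single b 1, fun i hi => ?_, ?_⟩
    · rw [hL]
      by_cases hib : i = b
      · subst hib
        simp only [lapG, if_true]
        nlinarith
      · simp only [lapG, hib, if_false]
        nlinarith [ha i hi, mul_nonneg hd (ha i hi)]
    · rw [hL]
      simp only [lapG, hcb, if_false]
      have hbc' : (0 : ℤ) < e b c := by exact_mod_cast hbc
      nlinarith [mul_nonneg hd (ha c hw)]

lemma exists_sub_laplacian_nonneg_off {e : Fin n → Fin n → ℕ} (hloop : ∀ i, e i i = 0)
    (hconn : ∀ i j, ReflTransGen (fun a b => 0 < e a b) i j) (q : Fin n) (f : Fin n → ℤ) :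
    ∃ a, ∀ i ≠ q, 0 ≤ (f - laplacian e a) i := by
  choose A hA hApos using fun w : {w // w ≠ q} =>
    exists_laplacian_nonneg_off_pos_at hloop (hconn q w) w.2
  refine ⟨-((∑ i, |f i|) • ∑ w, A w), fun i hi => ?_⟩
  have hsum : 1 ≤ ∑ w, laplacian e (A w) i :=
    calc 1 ≤ laplacian e (A ⟨i, hi⟩) i := hApos ⟨i, hi⟩
      _ ≤ ∑ w, laplacian e (A w) i :=
        single_le_sum (f := fun w => laplacian e (A w) i) (fun w _ => hA w i hi) (mem_univ _)
  have hf : -f i ≤ ∑ i, |f i| :=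
    (neg_le_abs (f i)).trans (single_le_sum (f := fun i => |f i|) (fun i _ => abs_nonneg _)
      (mem_univ i))
  have hK : 0 ≤ ∑ i, |f i| := sum_nonneg fun i _ => abs_nonneg (f i)
  simp only [map_neg, map_smul, map_sum, Pi.sub_apply, Pi.neg_apply, Pi.smul_apply,
    Finset.sum_apply, smul_eq_mul, sub_neg_eq_add]
  nlinarith [mul_le_mul_of_nonneg_left hsum hK]

def IsReducedAt (e : Fin n → Fin n → ℕ) (q : Fin n) (g : Fin n → ℤ) : Prop :=
  (∀ i ≠ q, 0 ≤ g i) ∧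
    ∀ S : Finset (Fin n), S.Nonempty → q ∉ S → ∃ v ∈ S, g v < ∑ k ∈ Sᶜ, (e v k : ℤ)

lemma exists_isReducedAt {e : Fin n → Fin n → ℕ} (hsym : ∀ i j, e i j = e j i)
    (hloop : ∀ i, e i i = 0) (hconn : ∀ i j, ReflTransGen (fun a b => 0 < e a b) i j)
    (q : Fin n) (f : Fin n → ℤ) : ∃ a, IsReducedAt e q (f - laplacian e a) := by
  obtain ⟨a₀, ha₀⟩ := exists_sub_laplacian_nonneg_off hloop hconn q f
  set M := (f - laplacian e a₀) q
  -- firing scripts are normalised at `q`, so that they are determined by their effect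
  set A : Set (Fin n → ℤ) :=
    {a | a q = 0 ∧ (∀ i ≠ q, 0 ≤ (f - laplacian e a) i) ∧ M ≤ (f - laplacian e a) q}
  have hA₀ : a₀ - (fun _ => a₀ q) ∈ A := by
    simp only [A, Set.mem_ofPred_eq, map_sub, laplacian_const hsym hloop, sub_zero]
    exact ⟨sub_self _, ha₀, le_rfl⟩
  have hfin : A.Finite := by
    set lo : Fin n → ℤ := fun i => if i = q then M else 0
    refine Set.Finite.of_finite_image (f := fun a => f - laplacian e a)
      ((Set.finite_Icc lo (lo + fun _ => ∑ i, f i - M)).subset ?_) fun a ha b hb hab => ?_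
    · rintro _ ⟨a, ⟨-, hpos, hq⟩, rfl⟩
      have hlo : lo ≤ f - laplacian e a := fun i => by
        by_cases hi : i = q
        · simp only [lo, hi, if_true]; exact hq
        · simp only [lo, hi, if_false]; exact hpos i hi
      have htotal : ∑ i, (f - laplacian e a - lo) i = ∑ i, f i - M := by
        simp [lo, sum_sub_distrib, sum_laplacian hsym hloop]
      refine ⟨hlo, fun i => ?_⟩
      have := single_le_sum (f := fun i => (f - laplacian e a - lo) i)
        (fun j _ => sub_nonneg.mpr (hlo j)) (mem_univ i)
      simp only [Pi.sub_apply, Pi.add_apply] at this htotal ⊢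
      linarith
    · have hker : laplacian e (a - b) = 0 := by
        rw [map_sub, sub_eq_zero]; exact sub_right_injective hab
      funext i
      have := eq_of_laplacian_eq_zero hsym hloop hconn hker i q
      simp only [Pi.sub_apply, ha.1, hb.1] at this
      linarith
  obtain ⟨a, ha, hmax⟩ := Set.exists_max_image A (fun a => ∑ i, a i) hfin ⟨_, hA₀⟩
  refine ⟨a, ha.2.1, fun S hS hqS => ?_⟩
  by_contra! hS'
  obtain ⟨haq, hapos, haM⟩ := ha
  simp only [Pi.sub_apply] at hapos haM hS'
  -- every vertex of `S` can afford to fire, so firing `S` once more stays in `A`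
  have hχ : a + (fun i => if i ∈ S then 1 else 0) ∈ A := by
    refine ⟨by simp [haq, hqS], fun i hi => ?_, ?_⟩
    · simp only [map_add, Pi.sub_apply, Pi.add_apply]
      by_cases hiS : i ∈ S
      · linarith [hS' i hiS, laplacian_indicator_of_mem hsym hloop hiS]
      · linarith [hapos i hi, laplacian_indicator_nonpos hsym hloop hiS]
    · simp only [map_add, Pi.sub_apply, Pi.add_apply]
      linarith [haM, laplacian_indicator_nonpos hsym hloop hqS]
  have hgrow : ∑ i, (a + fun i => if i ∈ S then 1 else 0 : Fin n → ℤ) i = ∑ i, a i + #S := by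
    simp [sum_add_distrib]
  have := hmax _ hχ
  have := hS.card_pos
  omega

lemma effG_iff {e : Fin n → Fin n → ℕ} {f : Fin n → ℤ} :
    effG e f ↔ ∃ a, ∀ i, 0 ≤ (f - laplacian e a) i := by
  constructor
  · rintro ⟨g, ⟨a, ha⟩, hg⟩
    refine ⟨a, fun i => ?_⟩
    rw [show laplacian e a = f - g from ha.symm, sub_sub_cancel]
    exact hg i
  · rintro ⟨a, ha⟩
    exact ⟨f - laplacian e a, ⟨a, sub_sub_cancel f _⟩, ha⟩

lemma effG_add {e : Fin n → Fin n → ℕ} {f f' : Fin n → ℤ} (hf : effG e f) (hf' : effG e f') :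
    effG e (f + f') := by
  obtain ⟨a, ha⟩ := effG_iff.mp hf
  obtain ⟨a', ha'⟩ := effG_iff.mp hf'
  refine effG_iff.mpr ⟨a + a', fun i => ?_⟩
  have := add_nonneg (ha i) (ha' i)
  simp only [map_add, Pi.sub_apply, Pi.add_apply] at this ⊢
  linarith

lemma not_effG_of_acyclic (hn : 0 < n) {e : Fin n → Fin n → ℕ} (hsym : ∀ i j, e i j = e j i)
    (hloop : ∀ i, e i i = 0) {ε : Fin n → Fin n → ℕ} (hε : ∀ i j, ε i j + ε j i = e i j)
    (hac : ∀ i, ¬ TransGen (fun a b => 0 < ε a b) i i) :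
    ¬ effG e (fun i => ∑ j, (ε j i : ℤ) - 1) := by
  rw [effG_iff]
  rintro ⟨c, hc⟩
  obtain ⟨m, -, hm⟩ := exists_max_image univ c (univ_nonempty_iff.mpr ⟨⟨0, hn⟩⟩)
  obtain ⟨v, hv, hsrc⟩ := exists_minimal_of_acyclic hac (S := {i | c i = c m}) ⟨m, rfl⟩
  have hindeg : ∑ j, (ε j v : ℤ) ≤ laplacian e c v := by
    rw [laplacian_apply hsym hloop]
    refine sum_le_sum fun k _ => ?_
    have hεk : (ε k v : ℤ) ≤ e v k := by
      have := hε k v; rw [hsym k v] at this; omega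
    by_cases hk : c k = c m
    · have hεk0 : ε k v = 0 := by simpa using hsrc k hk
      have hck : c v - c k = 0 := by simp only [Set.mem_ofPred_eq] at hv; omega
      simp [hεk0, hck]
    · have hlt : 1 ≤ c v - c k := by
        have := hm k (mem_univ k); simp only [Set.mem_ofPred_eq] at hv; omega
      nlinarith
  have := hc v
  simp only [Pi.sub_apply] at this
  linarith

lemma IsReducedAt.exists_lt_sum_compl {e : Fin n → Fin n → ℕ} {q : Fin n} {g : Fin n → ℤ}
    (hg : IsReducedAt e q g) (hq : g q < 0) (S : Finset (Fin n)) (hS : S.Nonempty) :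
    ∃ v ∈ S, g v < ∑ k ∈ Sᶜ, (e v k : ℤ) := by
  by_cases hqS : q ∈ S
  · exact ⟨q, hqS, hq.trans_le (by positivity)⟩
  · exact hg.2 S hS hqS

lemma exists_acyclic_of_not_effG {e : Fin n → Fin n → ℕ} (hsym : ∀ i j, e i j = e j i)
    (hloop : ∀ i, e i i = 0) (hconn : ∀ i j, ReflTransGen (fun a b => 0 < e a b) i j)
    {f : Fin n → ℤ} (hf : ¬ effG e f) :
    ∃ ε : Fin n → Fin n → ℕ, (∀ i j, ε i j + ε j i = e i j) ∧
      (∀ i, ¬ TransGen (fun a b => 0 < ε a b) i i) ∧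
      effG e ((fun i => ∑ j, (ε j i : ℤ) - 1) - f) := by
  obtain ⟨q, -⟩ : ∃ q, f q < 0 := by
    by_contra! h
    exact hf (effG_iff.mpr ⟨0, by simpa using h⟩)
  obtain ⟨a, hred⟩ := exists_isReducedAt hsym hloop hconn q f
  have hq : (f - laplacian e a) q < 0 := by
    by_contra! h
    refine hf (effG_iff.mpr ⟨a, fun i => ?_⟩)
    by_cases hi : i = q
    · exact hi ▸ h
    · exact hred.1 i hi
  obtain ⟨t, ht, hburn⟩ := exists_burning_order e _ (hred.exists_lt_sum_compl hq)
  refine ⟨orientAlong t e, orientAlong_add_swap ht hsym hloop,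
    fun i hi => (lt_of_transGen_orientAlong hi).false, effG_iff.mpr ⟨-a, fun i => ?_⟩⟩
  have := hburn i
  simp only [map_neg, Pi.sub_apply, Pi.neg_apply, sum_orientAlong t hsym] at this ⊢
  linarith

end Laplacian

theorem stmt8 (n : ℕ) (hn : 1 ≤ n) (e : Fin n → Fin n → ℕ)
    (hsym : ∀ i j, e i j = e j i) (hloop : ∀ i, e i i = 0)
    (hconn : ∀ i j : Fin n, Relation.ReflTransGen (fun a b => 0 < e a b) i j)
    (f : Fin n → ℤ) :
    Xor' (effG e f)
      (∃ ε : Fin n → Fin n → ℕ,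
        (∀ i j, ε i j + ε j i = e i j) ∧
        (∀ i : Fin n, ¬ Relation.TransGen (fun a b => 0 < ε a b) i i) ∧
        effG e ((fun i => (∑ j, (ε j i : ℤ)) - 1) - f)) := by
  by_cases hf : effG e f
  · refine Or.inl ⟨hf, ?_⟩
    rintro ⟨ε, hε, hac, hν⟩
    exact not_effG_of_acyclic hn hsym hloop hε hac (by simpa using effG_add hf hν)
  · exact Or.inr ⟨exists_acyclic_of_not_effG hsym hloop hconn hf, hf⟩
end

section
/- Any configuration f on a connected loopless multigraph G with m edges and n vertices whose degree satisfies deg(f) > m - n is L_G-effective. -/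
namespace S9


variable {n : ℕ} (e : Fin n → Fin n → ℕ)

lemma sum_smul_apply (a : Fin n → ℤ) (j : Fin n) :
    (∑ i, a i • lapG e i) j = ∑ i, a i * lapG e i j := by
  simp [Finset.sum_apply]

/-- row expansion helper over ℤ -/
lemma lap_row (hloop : ∀ i, e i i = 0) (i : Fin n) (x : Fin n → ℤ) :
    ∑ j, lapG e i j * x j = ∑ j, (e i j : ℤ) * (x i - x j) := by
  calc ∑ j, lapG e i j * x j
      = ∑ j, ((if j = i then (∑ k, (e i k : ℤ)) * x j else 0) + (-(e i j : ℤ) * x j)) := by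
        refine Finset.sum_congr rfl fun j _ => ?_
        by_cases h : j = i
        · subst h; simp [lapG, hloop]
        · simp [lapG, h]
    _ = (∑ k, (e i k : ℤ)) * x i + ∑ j, (-(e i j : ℤ) * x j) := by
        rw [Finset.sum_add_distrib, Finset.sum_ite_eq' Finset.univ i
          fun j => (∑ k, (e i k : ℤ)) * x j]
        simp
    _ = ∑ j, ((e i j : ℤ) * x i + (-(e i j : ℤ) * x j)) := by
        rw [Finset.sum_add_distrib, ← Finset.sum_mul]
    _ = ∑ j, (e i j : ℤ) * (x i - x j) := by
        refine Finset.sum_congr rfl fun j _ => by ring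

lemma lap_row_sum (hloop : ∀ i, e i i = 0) (i : Fin n) :
    ∑ j, lapG e i j = 0 := by
  have h := lap_row e hloop i (fun _ => (1 : ℤ))
  simpa using h


/-- row expansion helper over ℚ -/
lemma lap_rowQ (hloop : ∀ i, e i i = 0) (i : Fin n) (x : Fin n → ℚ) :
    ∑ j, (lapG e i j : ℚ) * x j = ∑ j, (e i j : ℚ) * (x i - x j) := by
  calc ∑ j, (lapG e i j : ℚ) * x j
      = ∑ j, ((if j = i then (∑ k, (e i k : ℚ)) * x j else 0) + (-(e i j : ℚ) * x j)) := by
        refine Finset.sum_congr rfl fun j _ => ?_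
        by_cases h : j = i
        · subst h; simp [lapG, hloop]
        · simp [lapG, h]
    _ = (∑ k, (e i k : ℚ)) * x i + ∑ j, (-(e i j : ℚ) * x j) := by
        rw [Finset.sum_add_distrib, Finset.sum_ite_eq' Finset.univ i
          fun j => (∑ k, (e i k : ℚ)) * x j]
        simp
    _ = ∑ j, ((e i j : ℚ) * x i + (-(e i j : ℚ) * x j)) := by
        rw [Finset.sum_add_distrib, ← Finset.sum_mul]
    _ = ∑ j, (e i j : ℚ) * (x i - x j) := by
        refine Finset.sum_congr rfl fun j _ => by ring

lemma quadId (hsym : ∀ i j, e i j = e j i) (hloop : ∀ i, e i i = 0) (x : Fin n → ℚ) :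
    ∑ i, ∑ j, (e i j : ℚ) * (x i - x j) ^ 2
      = 2 * ∑ i, x i * ∑ j, (lapG e i j : ℚ) * x j := by
  have hswap : ∑ i, ∑ j, (e i j : ℚ) * (x i - x j) * x j
      = ∑ i, ∑ j, -((e i j : ℚ) * (x i - x j) * x i) := by
    rw [Finset.sum_comm]
    refine Finset.sum_congr rfl fun i _ => Finset.sum_congr rfl fun j _ => ?_
    rw [hsym j i]; push_cast; ring
  have hexp : ∑ i, ∑ j, (e i j : ℚ) * (x i - x j) ^ 2
      = ∑ i, ∑ j, ((e i j : ℚ) * (x i - x j) * x i - (e i j : ℚ) * (x i - x j) * x j) := by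
    refine Finset.sum_congr rfl fun i _ => Finset.sum_congr rfl fun j _ => by ring
  rw [hexp]
  simp only [Finset.sum_sub_distrib]
  rw [hswap]
  simp only [Finset.sum_neg_distrib]
  have : ∀ i, x i * ∑ j, (lapG e i j : ℚ) * x j = ∑ j, (e i j : ℚ) * (x i - x j) * x i := by
    intro i
    rw [lap_rowQ e hloop i x, Finset.mul_sum]
    exact Finset.sum_congr rfl fun j _ => by ring
  rw [Finset.sum_congr rfl fun i _ => this i]
  ring






lemma rat_clear (qq : ℚ) (N : ℕ) (h : qq.den ∣ N) :
    ((qq.num * (N / qq.den : ℕ) : ℤ) : ℚ) = qq * N := by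
  obtain ⟨k, hk⟩ := h
  subst hk
  rw [Nat.mul_div_cancel_left _ qq.pos]
  push_cast
  rw [← mul_assoc, Rat.mul_den_eq_num]

lemma exists_beta (hsym : ∀ i j, e i j = e j i) (hloop : ∀ i, e i i = 0)
    (hconn : ∀ i j : Fin n, Relation.ReflTransGen (fun a b => 0 < e a b) i j)
    (q : Fin n) :
    ∃ (c : ℤ) (β : Fin n → ℤ), 0 < c ∧ β q = 0 ∧ (∀ v, β v ≤ 0) ∧
      ∀ v, v ≠ q → ∑ j, lapG e v j * β j = -c := by
  classical
  set M : Matrix {v : Fin n // v ≠ q} {v : Fin n // v ≠ q} ℚ :=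
    fun i j => (lapG e i.1 j.1 : ℚ) with hM
  -- key: extension of a subtype vector
  have extRow : ∀ (x : {v : Fin n // v ≠ q} → ℚ) (v : Fin n) (hv : v ≠ q),
      ∑ j, (lapG e v j : ℚ) * (fun w => if h : w = q then 0 else x ⟨w, h⟩) j
        = M.mulVec x ⟨v, hv⟩ := by
    intro x v hv
    set y : Fin n → ℚ := fun w => if h : w = q then 0 else x ⟨w, h⟩ with hy
    have h1 : ∑ j, (lapG e v j : ℚ) * y j
        = ∑ j ∈ Finset.univ.erase q, (lapG e v j : ℚ) * y j := by
      rw [← Finset.add_sum_erase _ _ (Finset.mem_univ q)]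
      simp [hy]
    rw [h1, Finset.sum_subtype (Finset.univ.erase q)
      (p := fun w => w ≠ q) (fun w => by simp [Finset.mem_erase])]
    simp only [Matrix.mulVec, dotProduct, hM]
    refine Finset.sum_congr rfl fun j _ => ?_
    simp [hy, j.2]
  -- injectivity of M
  have hker : ∀ x, M.mulVec x = 0 → x = 0 := by
    intro x hx
    set y : Fin n → ℚ := fun w => if h : w = q then 0 else x ⟨w, h⟩ with hy
    have hyq : y q = 0 := by simp [hy]
    have hrow : ∀ v, v ≠ q → ∑ j, (lapG e v j : ℚ) * y j = 0 := by
      intro v hv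
      rw [extRow x v hv, hx]; rfl
    have hQ : ∑ i, y i * ∑ j, (lapG e i j : ℚ) * y j = 0 := by
      rw [← Finset.add_sum_erase _ _ (Finset.mem_univ q)]
      rw [hyq]
      simp only [zero_mul, zero_add]
      refine Finset.sum_eq_zero fun v hv => ?_
      rw [hrow v (Finset.mem_erase.mp hv).1, mul_zero]
    have hquad : ∑ i, ∑ j, (e i j : ℚ) * (y i - y j) ^ 2 = 0 := by
      rw [quadId e hsym hloop y, hQ, mul_zero]
    have hterm : ∀ i j, (e i j : ℚ) * (y i - y j) ^ 2 = 0 := by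
      intro i j
      have h1 : ∀ i ∈ Finset.univ, (0:ℚ) ≤ ∑ j, (e i j : ℚ) * (y i - y j) ^ 2 :=
        fun i _ => Finset.sum_nonneg fun j _ => by positivity
      have h2 := (Finset.sum_eq_zero_iff_of_nonneg h1).mp hquad i (Finset.mem_univ i)
      have h3 : ∀ j ∈ Finset.univ, (0:ℚ) ≤ (e i j : ℚ) * (y i - y j) ^ 2 :=
        fun j _ => by positivity
      exact (Finset.sum_eq_zero_iff_of_nonneg h3).mp h2 j (Finset.mem_univ j)
    have hharm : ∀ i j, 0 < e i j → y i = y j := by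
      intro i j hij
      have := hterm i j
      rcases mul_eq_zero.mp this with h | h
      · exfalso; have : (0:ℚ) < e i j := by exact_mod_cast hij
        linarith
      · have := pow_eq_zero_iff (n := 2) (by norm_num) |>.mp h
        linarith [sub_eq_zero.mp this]
    have hzero : ∀ v, y v = 0 := by
      intro v
      have h := hconn q v
      induction h with
      | refl => exact hyq
      | tail _ hbc ih => rw [← hharm _ _ hbc]; exact ih
    funext v
    have : y v.1 = x v := by simp [hy, v.2]
    rw [← this, hzero]; rfl
  have hinj : Function.Injective M.mulVecLin := by
    intro a b hab
    have : M.mulVec (a - b) = 0 := by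
      have := sub_eq_zero.mpr hab
      rw [← map_sub] at this
      rw [show M.mulVec (a-b) = M.mulVecLin (a-b) from rfl]
      exact this
    have := hker _ this
    exact sub_eq_zero.mp this
  have hsurj : Function.Surjective M.mulVecLin :=
    (LinearMap.injective_iff_surjective).mp hinj
  obtain ⟨x, hx⟩ := hsurj (fun _ => (-1 : ℚ))
  set y : Fin n → ℚ := fun w => if h : w = q then 0 else x ⟨w, h⟩ with hy
  have hrow : ∀ v, v ≠ q → ∑ j, (lapG e v j : ℚ) * y j = -1 := by
    intro v hv
    rw [extRow x v hv]
    rw [Matrix.mulVecLin_apply] at hx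
    rw [hx]
  -- clear denominators
  set N : ℕ := ∏ j, (y j).den with hN
  have hNpos : 0 < N := Finset.prod_pos fun j _ => (y j).pos
  have hdvd : ∀ j, (y j).den ∣ N := fun j => Finset.dvd_prod_of_mem _ (Finset.mem_univ j)
  set β : Fin n → ℤ := fun j => (y j).num * (N / (y j).den : ℕ) with hβ
  have hβcast : ∀ j, ((β j : ℤ) : ℚ) = y j * N := fun j => rat_clear (y j) N (hdvd j)
  have hβq : β q = 0 := by
    have : ((β q : ℤ) : ℚ) = 0 := by rw [hβcast q]; simp [hy]
    exact_mod_cast this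
  have hβrow : ∀ v, v ≠ q → ∑ j, lapG e v j * β j = -(N : ℤ) := by
    intro v hv
    have : ((∑ j, lapG e v j * β j : ℤ) : ℚ) = ((-(N:ℤ) : ℤ) : ℚ) := by
      push_cast
      calc ∑ j, (lapG e v j : ℚ) * (β j : ℚ)
          = ∑ j, (lapG e v j : ℚ) * (y j * N) := by
            refine Finset.sum_congr rfl fun j _ => by rw [hβcast j]
        _ = (∑ j, (lapG e v j : ℚ) * y j) * N := by
            rw [Finset.sum_mul]
            exact Finset.sum_congr rfl fun j _ => by ring
        _ = -(N:ℚ) := by rw [hrow v hv]; ring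
    exact_mod_cast this
  -- maximum principle: β ≤ 0
  have hβle : ∀ v, β v ≤ 0 := by
    obtain ⟨v₀, _, hmax⟩ := Finset.exists_max_image Finset.univ β ⟨q, Finset.mem_univ q⟩
    intro v
    rcases eq_or_ne v₀ q with h | h
    · calc β v ≤ β v₀ := hmax v (Finset.mem_univ v)
        _ = 0 := by rw [h, hβq]
    · exfalso
      have h1 := hβrow v₀ h
      rw [lap_row e hloop v₀ β] at h1
      have h2 : (0:ℤ) ≤ ∑ j, (e v₀ j : ℤ) * (β v₀ - β j) := by
        refine Finset.sum_nonneg fun j _ => ?_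
        have := hmax j (Finset.mem_univ j)
        have he : (0:ℤ) ≤ (e v₀ j : ℤ) := Int.natCast_nonneg _
        nlinarith
      omega
  exact ⟨N, β, by exact_mod_cast hNpos, hβq, hβle, hβrow⟩

end S9

theorem stmt9 (n : ℕ) (hn : 1 ≤ n) (e : Fin n → Fin n → ℕ)
    (hsym : ∀ i j, e i j = e j i) (hloop : ∀ i, e i i = 0)
    (hconn : ∀ i j : Fin n, Relation.ReflTransGen (fun a b => 0 < e a b) i j)
    (m : ℕ) (hm : 2 * m = ∑ i, ∑ j, e i j)
    (f : Fin n → ℤ) (hdeg : (m : ℤ) - (n : ℤ) < ∑ i, f i) :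
    effG e f := by
  classical
  set q : Fin n := ⟨0, hn⟩ with hqdef
  obtain ⟨c, β, hc, hβq, hβle, hβrow⟩ := S9.exists_beta e hsym hloop hconn q
  have lapsym : ∀ i v : Fin n, lapG e i v = lapG e v i := by
    intro i v
    unfold lapG
    rcases eq_or_ne v i with h | h
    · subst h; simp
    · rw [if_neg h, if_neg (Ne.symm h), hsym i v]
  have lapsymm : ∀ (b : Fin n → ℤ) (v : Fin n),
      ∑ i, b i * lapG e i v = ∑ j, lapG e v j * b j :=
    fun b v => Finset.sum_congr rfl fun i _ => by rw [lapsym i v, mul_comm]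
  -- degree is preserved
  have sumconst : ∀ g : Fin n → ℤ, topG e f g → ∑ i, g i = ∑ i, f i := by
    rintro g ⟨a, ha⟩
    have h1 : ∀ j, f j - g j = ∑ i, a i * lapG e i j := by
      intro j
      have h := congrFun ha j
      simpa [S9.sum_smul_apply] using h
    have h2 : ∑ j, (f j - g j) = 0 := by
      calc ∑ j, (f j - g j) = ∑ j, ∑ i, a i * lapG e i j :=
            Finset.sum_congr rfl fun j _ => h1 j
        _ = ∑ i, ∑ j, a i * lapG e i j := Finset.sum_comm
        _ = ∑ i, a i * ∑ j, lapG e i j :=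
            Finset.sum_congr rfl fun i _ => (Finset.mul_sum _ _ _).symm
        _ = 0 := by simp [S9.lap_row_sum e hloop]
    rw [Finset.sum_sub_distrib] at h2
    linarith
  set P : (Fin n → ℤ) → Prop := fun g => topG e f g ∧ ∀ v, v ≠ q → 0 ≤ g v with hPdef
  -- P is nonempty
  have hPne : ∃ g, P g := by
    set t : ℤ := ∑ v, |f v| with ht
    have htnn : 0 ≤ t := Finset.sum_nonneg fun v _ => abs_nonneg _
    have ht1 : ∀ v, -f v ≤ t := by
      intro v
      calc -f v ≤ |f v| := neg_le_abs _
        _ ≤ t := Finset.single_le_sum (fun w _ => abs_nonneg (f w)) (Finset.mem_univ v)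
    refine ⟨fun j => f j - ∑ i, (t * β i) * lapG e i j, ⟨fun i => t * β i, ?_⟩, ?_⟩
    · funext j
      simp [S9.sum_smul_apply]
    · intro v hv
      have hcol : ∑ i, (t * β i) * lapG e i v = t * (-c) := by
        calc ∑ i, (t * β i) * lapG e i v = t * ∑ i, β i * lapG e i v := by
              rw [Finset.mul_sum]
              exact Finset.sum_congr rfl fun i _ => by ring
          _ = t * ∑ j, lapG e v j * β j := by rw [lapsymm]
          _ = t * (-c) := by rw [hβrow v hv]
      simp only [hcol]
      have := ht1 v
      nlinarith
  -- the potential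
  set Φ : (Fin n → ℤ) → ℤ := fun g => ∑ v, β v * g v with hΦdef
  have hbdd : ∀ g, P g → Φ g ≤ 0 := by
    intro g hg
    refine Finset.sum_nonpos fun v _ => ?_
    rcases eq_or_ne v q with h | h
    · rw [h, hβq, zero_mul]
    · exact mul_nonpos_of_nonpos_of_nonneg (hβle v) (hg.2 v h)
  obtain ⟨Mx, ⟨g, hgP, hgΦ⟩, hMmax⟩ :=
    Int.exists_greatest_of_bdd (P := fun d => ∃ g, P g ∧ Φ g = d)
      ⟨0, fun z ⟨g, hg, hz⟩ => hz ▸ hbdd g hg⟩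
      ⟨Φ hPne.choose, hPne.choose, hPne.choose_spec, rfl⟩
  -- column sums of the Laplacian over a set A
  have colsum : ∀ (A : Finset (Fin n)) (j : Fin n), j ∈ A →
      ∑ i ∈ A, lapG e i j = ∑ u ∈ Aᶜ, (e j u : ℤ) := by
    intro A j hj
    have h1 : ∑ i ∈ A, lapG e i j
        = lapG e j j + ∑ i ∈ A.erase j, lapG e i j := (Finset.add_sum_erase A _ hj).symm
    have h2 : ∑ i ∈ A.erase j, lapG e i j = -∑ i ∈ A.erase j, (e i j : ℤ) := by
      rw [← Finset.sum_neg_distrib]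
      refine Finset.sum_congr rfl fun i hi => ?_
      have hne : j ≠ i := fun h => (Finset.mem_erase.mp hi).1 h.symm
      simp [lapG, hne]
    have h3 : ∑ i ∈ A.erase j, (e i j : ℤ) = ∑ i ∈ A, (e i j : ℤ) := by
      rw [← Finset.add_sum_erase A _ hj, hloop j]
      simp
    have h4 : lapG e j j = ∑ k, (e j k : ℤ) := by simp [lapG]
    have h5 : ∑ k, (e j k : ℤ) = ∑ k ∈ A, (e j k : ℤ) + ∑ k ∈ Aᶜ, (e j k : ℤ) :=
      (Finset.sum_add_sum_compl A _).symm
    have h6 : ∑ i ∈ A, (e i j : ℤ) = ∑ i ∈ A, (e j i : ℤ) :=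
      Finset.sum_congr rfl fun i _ => by rw [hsym]
    rw [h1, h2, h3, h4, h5, h6]
    ring
  have colsum' : ∀ (A : Finset (Fin n)) (j : Fin n), j ∉ A →
      ∑ i ∈ A, lapG e i j = -∑ i ∈ A, (e i j : ℤ) := by
    intro A j hj
    rw [← Finset.sum_neg_distrib]
    refine Finset.sum_congr rfl fun i hi => ?_
    have hne : j ≠ i := fun h => hj (h ▸ hi)
    simp [lapG, hne]
  -- the maximizer is q-reduced
  have hred : ∀ A : Finset (Fin n), A.Nonempty → q ∉ A →
      ∃ v ∈ A, g v < ∑ u ∈ Aᶜ, (e v u : ℤ) := by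
    intro A hAne hqA
    by_contra hcon
    push_neg at hcon
    set g' : Fin n → ℤ := fun j => g j - ∑ i ∈ A, lapG e i j with hg'def
    have hg'top : topG e f g' := by
      obtain ⟨a, ha⟩ := hgP.1
      refine ⟨fun i => a i + (if i ∈ A then 1 else 0), ?_⟩
      funext j
      have h1 := congrFun ha j
      simp only [Pi.sub_apply, S9.sum_smul_apply] at h1 ⊢
      have h2 : ∑ i, (a i + (if i ∈ A then 1 else 0)) * lapG e i j
          = (∑ i, a i * lapG e i j) + ∑ i ∈ A, lapG e i j := by
        calc ∑ i, (a i + (if i ∈ A then 1 else 0)) * lapG e i j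
            = ∑ i, (a i * lapG e i j + (if i ∈ A then lapG e i j else 0)) := by
              refine Finset.sum_congr rfl fun i _ => ?_
              by_cases hi : i ∈ A <;> simp [hi] <;> ring
          _ = (∑ i, a i * lapG e i j) + ∑ i, (if i ∈ A then lapG e i j else 0) :=
              Finset.sum_add_distrib
          _ = (∑ i, a i * lapG e i j) + ∑ i ∈ A, lapG e i j := by
              rw [Finset.sum_ite_mem, Finset.univ_inter]
      rw [h2, hg'def]
      simp only
      linarith
    have hg'P : P g' := by
      refine ⟨hg'top, fun v hv => ?_⟩
      simp only [hg'def]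
      by_cases hvA : v ∈ A
      · rw [colsum A v hvA]
        have := hcon v hvA
        linarith
      · rw [colsum' A v hvA]
        have h1 : (0:ℤ) ≤ ∑ i ∈ A, (e i v : ℤ) :=
          Finset.sum_nonneg fun i _ => Int.natCast_nonneg _
        have h2 := hgP.2 v hv
        linarith
    have hΦ' : Φ g' = Φ g + c * A.card := by
      have h1 : Φ g' = Φ g - ∑ v, β v * ∑ i ∈ A, lapG e i v := by
        simp only [hΦdef, hg'def]
        rw [← Finset.sum_sub_distrib]
        exact Finset.sum_congr rfl fun v _ => by ring
      have h2 : ∑ v, β v * ∑ i ∈ A, lapG e i v = ∑ i ∈ A, ∑ v, β v * lapG e i v := by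
        rw [← Finset.sum_comm]
        exact Finset.sum_congr rfl fun v _ => Finset.mul_sum _ _ _
      have h3 : ∀ i ∈ A, ∑ v, β v * lapG e i v = -c := by
        intro i hi
        rw [← hβrow i (fun h => hqA (h ▸ hi))]
        exact Finset.sum_congr rfl fun v _ => mul_comm _ _
      rw [h1, h2, Finset.sum_congr rfl h3]
      simp [mul_comm]
    have hle : Φ g' ≤ Mx := hMmax _ ⟨g', hg'P, rfl⟩
    have hcard : (1:ℤ) ≤ A.card := by exact_mod_cast Finset.card_pos.mpr hAne
    rw [hΦ'] at hle
    rw [← hgΦ] at hle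
    nlinarith
  -- Dhar counting
  set T : Finset (Fin n) → ℤ := fun A =>
    ∑ p ∈ Finset.univ.filter (fun p : Fin n × Fin n => p.1 ∈ A ∨ p.2 ∈ A),
      (e p.1 p.2 : ℤ) with hTdef
  have dhar : ∀ A : Finset (Fin n), q ∉ A → 2 * ∑ v ∈ A, g v ≤ T A - 2 * A.card := by
    intro A
    induction A using Finset.strongInduction with
    | _ A ih =>
      intro hqA
      rcases A.eq_empty_or_nonempty with rfl | hAne
      · simp [hTdef]
      · obtain ⟨v, hvA, hvlt⟩ := hred A hAne hqA
        have hsubA : A.erase v ⊂ A := Finset.erase_ssubset hvA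
        have hqA' : q ∉ A.erase v := fun h => hqA (Finset.mem_of_mem_erase h)
        have IH := ih (A.erase v) hsubA hqA'
        -- key counting inequality
        have hkey : T (A.erase v) + 2 * ∑ u ∈ Aᶜ, (e v u : ℤ) ≤ T A := by
          set Pa := Finset.univ.filter (fun p : Fin n × Fin n => p.1 ∈ A ∨ p.2 ∈ A) with hPa
          set Pa' := Finset.univ.filter
            (fun p : Fin n × Fin n => p.1 ∈ A.erase v ∨ p.2 ∈ A.erase v) with hPa'
          set D1 : Finset (Fin n × Fin n) := {v} ×ˢ Aᶜ with hD1
          set D2 : Finset (Fin n × Fin n) := Aᶜ ×ˢ {v} with hD2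
          have hd12 : Disjoint D1 D2 := by
            rw [Finset.disjoint_left]
            intro p hp1 hp2
            rw [hD1, Finset.mem_product] at hp1
            rw [hD2, Finset.mem_product] at hp2
            have hv1 : p.1 = v := Finset.mem_singleton.mp hp1.1
            have hv2 : p.1 ∈ Aᶜ := hp2.1
            rw [hv1, Finset.mem_compl] at hv2
            exact hv2 hvA
          have hdisj : Disjoint Pa' (D1 ∪ D2) := by
            rw [Finset.disjoint_left]
            intro p hp hpd
            rw [hPa', Finset.mem_filter] at hp
            rcases Finset.mem_union.mp hpd with h | h
            · rw [hD1, Finset.mem_product, Finset.mem_singleton, Finset.mem_compl] at h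
              rcases hp.2 with h1 | h1
              · rw [h.1] at h1
                exact (Finset.notMem_erase v A) h1
              · exact h.2 (Finset.mem_of_mem_erase h1)
            · rw [hD2, Finset.mem_product, Finset.mem_singleton, Finset.mem_compl] at h
              rcases hp.2 with h1 | h1
              · exact h.1 (Finset.mem_of_mem_erase h1)
              · rw [h.2] at h1
                exact (Finset.notMem_erase v A) h1
          have hsub : Pa' ∪ (D1 ∪ D2) ⊆ Pa := by
            intro p hp
            rw [hPa, Finset.mem_filter]
            refine ⟨Finset.mem_univ _, ?_⟩
            rcases Finset.mem_union.mp hp with h | h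
            · rw [hPa', Finset.mem_filter] at h
              rcases h.2 with h1 | h1
              · exact Or.inl (Finset.mem_of_mem_erase h1)
              · exact Or.inr (Finset.mem_of_mem_erase h1)
            · rcases Finset.mem_union.mp h with h1 | h1
              · rw [hD1, Finset.mem_product, Finset.mem_singleton] at h1
                exact Or.inl (h1.1 ▸ hvA)
              · rw [hD2, Finset.mem_product, Finset.mem_singleton] at h1
                exact Or.inr (h1.2 ▸ hvA)
          have hS1 : ∑ p ∈ D1, (e p.1 p.2 : ℤ) = ∑ u ∈ Aᶜ, (e v u : ℤ) := by
            rw [hD1, Finset.sum_product]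
            simp
          have hS2 : ∑ p ∈ D2, (e p.1 p.2 : ℤ) = ∑ u ∈ Aᶜ, (e v u : ℤ) := by
            rw [hD2, Finset.sum_product]
            simp only [Finset.sum_singleton]
            exact Finset.sum_congr rfl fun u _ => by rw [hsym]
          calc T (A.erase v) + 2 * ∑ u ∈ Aᶜ, (e v u : ℤ)
              = ∑ p ∈ Pa' ∪ (D1 ∪ D2), (e p.1 p.2 : ℤ) := by
                rw [Finset.sum_union hdisj, Finset.sum_union hd12, hS1, hS2]
                simp only [hTdef]
                ring
            _ ≤ ∑ p ∈ Pa, (e p.1 p.2 : ℤ) :=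
                Finset.sum_le_sum_of_subset_of_nonneg hsub
                  (fun p _ _ => Int.natCast_nonneg _)
            _ = T A := rfl
        have hsum : ∑ w ∈ A, g w = g v + ∑ w ∈ A.erase v, g w :=
          (Finset.add_sum_erase A g hvA).symm
        have hcard : (A.card : ℤ) = (A.erase v).card + 1 := by
          have h1 := Finset.card_erase_of_mem hvA
          have h2 : 1 ≤ A.card := Finset.card_pos.mpr hAne
          omega
        rw [hsum, hcard]
        linarith
  -- conclusion
  have hA₀ := dhar (Finset.univ.erase q) (Finset.notMem_erase q _)
  have hTle : T (Finset.univ.erase q) ≤ ∑ i, ∑ j, (e i j : ℤ) := by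
    calc T (Finset.univ.erase q)
        ≤ ∑ p ∈ (Finset.univ : Finset (Fin n × Fin n)), (e p.1 p.2 : ℤ) :=
          Finset.sum_le_sum_of_subset_of_nonneg (Finset.filter_subset _ _)
            (fun p _ _ => Int.natCast_nonneg _)
      _ = ∑ i, ∑ j, (e i j : ℤ) := by
          rw [← Finset.univ_product_univ, Finset.sum_product]
  have h2m : ∑ i, ∑ j, (e i j : ℤ) = 2 * (m:ℤ) := by
    exact_mod_cast hm.symm
  have hcard₀ : ((Finset.univ.erase q).card : ℤ) = (n:ℤ) - 1 := by
    have h1 := Finset.card_erase_of_mem (Finset.mem_univ q)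
    rw [Finset.card_univ, Fintype.card_fin] at h1
    omega
  have hsplit : g q + ∑ w ∈ Finset.univ.erase q, g w = ∑ w, g w :=
    Finset.add_sum_erase Finset.univ g (Finset.mem_univ q)
  have hdg : ∑ w, g w = ∑ i, f i := sumconst g hgP.1
  have hgq : 0 ≤ g q := by
    have h1 : 2 * (∑ i, f i - g q) ≤ 2 * (m:ℤ) - 2 * ((n:ℤ) - 1) := by
      have := hA₀
      rw [hcard₀] at this
      have h2 : ∑ w ∈ Finset.univ.erase q, g w = ∑ i, f i - g q := by
        rw [← hdg]; linarith
      rw [h2] at this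
      linarith
    linarith
  refine ⟨g, hgP.1, fun v => ?_⟩
  rcases eq_or_ne v q with h | h
  · rw [h]; exact hgq
  · exact hgP.2 v h
end

section
/- Riemann-Roch for graphs: let G be a connected loopless multigraph with n vertices and m edges and let kappa be the configuration with kappa_i = d_i - 2 for all i. Then for every configuration f, rho(f) - rho(kappa - f) = deg(f) + n - m, where rho denotes the rank. -/
set_option linter.unusedSectionVars false
set_option linter.unusedVariables false
set_option maxHeartbeats 1000000


namespace BN
open Finset

variable {n : ℕ} (e : Fin n → Fin n → ℕ)

def LG : Submodule ℤ (Fin n → ℤ) := Submodule.span ℤ (Set.range (lapG e))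

theorem topG_iff {f g : Fin n → ℤ} : topG e f g ↔ f - g ∈ LG e := by
  rw [LG, Submodule.mem_span_range_iff_exists_fun]
  exact ⟨fun ⟨a, h⟩ => ⟨a, h.symm⟩, fun ⟨a, h⟩ => ⟨a, h.symm⟩⟩

variable {e}

theorem top_refl (f : Fin n → ℤ) : topG e f f := by
  rw [topG_iff]; simp

theorem top_symm {f g : Fin n → ℤ} (h : topG e f g) : topG e g f := by
  rw [topG_iff] at h ⊢
  have := neg_mem h; simpa using this

theorem top_trans {f g h : Fin n → ℤ} (h1 : topG e f g) (h2 : topG e g h) : topG e f h := by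
  rw [topG_iff] at h1 h2 ⊢
  have := add_mem h1 h2; simpa using this

theorem top_add_right {f g : Fin n → ℤ} (h : topG e f g) (c : Fin n → ℤ) :
    topG e (f + c) (g + c) := by
  rw [topG_iff] at h ⊢
  simpa [add_sub_add_comm] using h

theorem top_sub_right {f g : Fin n → ℤ} (h : topG e f g) (c : Fin n → ℤ) :
    topG e (f - c) (g - c) := by
  simpa [sub_eq_add_neg] using top_add_right h (-c)

variable (hloop : ∀ i, e i i = 0)
include hloop

theorem deg_lapG (i : Fin n) : ∑ j, lapG e i j = 0 := by
  have h : ∀ j, lapG e i j = (if j = i then (∑ k, (e i k : ℤ)) else 0) - (e i j : ℤ) := by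
    intro j
    by_cases hj : j = i
    · subst hj; simp [lapG, hloop j]
    · simp [lapG, hj]
  simp [h, Finset.sum_sub_distrib]

theorem deg_top {f g : Fin n → ℤ} (h : topG e f g) : ∑ i, f i = ∑ i, g i := by
  obtain ⟨a, ha⟩ := h
  have h2 : ∑ j, (f - g) j = ∑ j, (∑ i, a i • lapG e i) j := by rw [ha]
  have h3 : ∑ j, (f j - g j) = ∑ i, a i * ∑ j, lapG e i j := by
    rw [show ∑ i, a i * ∑ j, lapG e i j = ∑ j, ∑ i, a i * lapG e i j by
      rw [Finset.sum_comm]; simp [Finset.mul_sum]]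
    simpa [Finset.sum_apply] using h2
  simp only [deg_lapG hloop, mul_zero, Finset.sum_const_zero, Finset.sum_sub_distrib] at h3
  linarith

theorem eff_nonneg_deg {f : Fin n → ℤ} (h : effG e f) : 0 ≤ ∑ i, f i := by
  obtain ⟨g, htop, hg⟩ := h
  rw [deg_top hloop htop]
  exact Finset.sum_nonneg fun i _ => hg i

omit hloop

theorem eff_of_nonneg {f : Fin n → ℤ} (h : ∀ i, 0 ≤ f i) : effG e f :=
  ⟨f, top_refl f, h⟩

theorem eff_of_top {f g : Fin n → ℤ} (h : topG e f g) (hg : effG e g) : effG e f := by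
  obtain ⟨g', htop, hg'⟩ := hg
  exact ⟨g', top_trans h htop, hg'⟩

theorem eff_add_nonneg {f w : Fin n → ℤ} (h : effG e f) (hw : ∀ i, 0 ≤ w i) :
    effG e (f + w) := by
  obtain ⟨g, htop, hg⟩ := h
  exact ⟨g + w, top_add_right htop w, fun i => add_nonneg (hg i) (hw i)⟩

variable (e) in
/-- The divisor associated to a total order (given by position map `σ`). -/
def nuG (σ : Fin n ≃ Fin n) : Fin n → ℤ :=
  fun i => (∑ j ∈ Finset.univ.filter (fun j => σ j < σ i), (e i j : ℤ)) - 1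

section nu
variable (hsym : ∀ i j, e i j = e j i)
include hsym hloop

omit hsym in
theorem nu_pair (σ : Fin n ≃ Fin n) (i : Fin n) :
    ((∑ j ∈ Finset.univ.filter (fun j => σ j < σ i), (e i j : ℤ)) +
      ∑ j ∈ Finset.univ.filter (fun j => σ i < σ j), (e i j : ℤ)) = ∑ j, (e i j : ℤ) := by
  rw [Finset.sum_filter, Finset.sum_filter, ← Finset.sum_add_distrib]
  refine Finset.sum_congr rfl fun j _ => ?_
  by_cases hij : j = i
  · subst hij; simp [hloop j]
  · have hne : σ j ≠ σ i := fun hh => hij (σ.injective hh)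
    rcases lt_or_gt_of_ne hne with h | h
    · simp [h, not_lt_of_gt h]
    · simp [h, not_lt_of_gt h]

theorem nu_add_nu_rev (σ : Fin n ≃ Fin n) :
    nuG e σ + nuG e (σ.trans Fin.revPerm) = (fun i => (∑ k, (e i k : ℤ)) - 2) := by
  funext i
  have h1 : Finset.univ.filter (fun j => (σ.trans Fin.revPerm) j < (σ.trans Fin.revPerm) i)
      = Finset.univ.filter (fun j => σ i < σ j) := by
    refine Finset.filter_congr fun j _ => ?_
    simp [Fin.rev_lt_rev]
  have := nu_pair hloop σ i
  simp only [nuG, Pi.add_apply, h1]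
  omega

theorem deg_nu (σ : Fin n ≃ Fin n) :
    2 * (∑ i, nuG e σ i) = (∑ i, ∑ j, (e i j : ℤ)) - 2 * n := by
  have hST : ∀ i, ((∑ j ∈ Finset.univ.filter (fun j => σ j < σ i), (e i j : ℤ)) +
      ∑ j ∈ Finset.univ.filter (fun j => σ i < σ j), (e i j : ℤ)) = ∑ j, (e i j : ℤ) :=
    nu_pair hloop σ
  have hswap : (∑ i, ∑ j ∈ Finset.univ.filter (fun j => σ i < σ j), (e i j : ℤ))
      = ∑ i, ∑ j ∈ Finset.univ.filter (fun j => σ j < σ i), (e i j : ℤ) := by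
    simp only [Finset.sum_filter]
    rw [Finset.sum_comm]
    refine Finset.sum_congr rfl fun i _ => Finset.sum_congr rfl fun j _ => ?_
    rw [hsym j i]
  have hdeg : ∑ i, nuG e σ i
      = (∑ i, ∑ j ∈ Finset.univ.filter (fun j => σ j < σ i), (e i j : ℤ)) - n := by
    simp [nuG, Finset.sum_sub_distrib]
  have h2 : (∑ i, ∑ j ∈ Finset.univ.filter (fun j => σ j < σ i), (e i j : ℤ))
      + (∑ i, ∑ j ∈ Finset.univ.filter (fun j => σ i < σ j), (e i j : ℤ))
      = ∑ i, ∑ j, (e i j : ℤ) := by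
    rw [← Finset.sum_add_distrib]
    exact Finset.sum_congr rfl fun i _ => hST i
  rw [hdeg]
  omega

theorem nu_not_eff (hn : 1 ≤ n) (σ : Fin n ≃ Fin n) : ¬ effG e (nuG e σ) := by
  rintro ⟨h, ⟨a, ha⟩, hpos⟩
  have hne : (Finset.univ : Finset (Fin n)).Nonempty := ⟨⟨0, hn⟩, Finset.mem_univ _⟩
  obtain ⟨i0, -, hmax⟩ := Finset.exists_max_image Finset.univ a hne
  set A : Finset (Fin n) := Finset.univ.filter (fun i => a i = a i0) with hA
  have hAne : A.Nonempty := ⟨i0, by simp [hA]⟩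
  obtain ⟨i, hiA, hmin⟩ := Finset.exists_min_image A σ hAne
  have hai : a i = a i0 := (Finset.mem_filter.mp hiA).2
  -- compute h i
  have hhi : h i = nuG e σ i - ∑ j, (a i - a j) * (e i j : ℤ) := by
    have h0 : h i = nuG e σ i - ∑ j, a j * lapG e j i := by
      have := congrFun ha i
      simp only [Pi.sub_apply, Finset.sum_apply, Pi.smul_apply, smul_eq_mul] at this
      linarith
    rw [h0]
    congr 1
    have hterm : ∀ j, a j * lapG e j i
        = (if j = i then a i * ∑ k, (e i k : ℤ) else 0) - a j * (e j i : ℤ) := by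
      intro j
      by_cases hj : j = i
      · subst hj; simp [lapG, hloop j]
      · have hij : i ≠ j := fun hh => hj hh.symm
        simp [lapG, hij, hj]
    simp only [hterm, Finset.sum_sub_distrib, Finset.sum_ite_eq' Finset.univ i,
      Finset.mem_univ, if_true]
    rw [Finset.mul_sum]
    rw [← Finset.sum_sub_distrib]
    refine Finset.sum_congr rfl fun j _ => ?_
    rw [hsym j i]
    ring
  -- lower bound on the subtracted sum
  have hb1 : ∑ j ∈ Finset.univ.filter (fun j => σ j < σ i), ((e i j : ℤ))
      ≤ ∑ j ∈ Finset.univ.filter (fun j => σ j < σ i), (a i - a j) * (e i j : ℤ) := by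
    refine Finset.sum_le_sum fun j hj => ?_
    have hjlt : σ j < σ i := (Finset.mem_filter.mp hj).2
    have hjA : j ∉ A := fun hjA => absurd (hmin j hjA) (not_le_of_gt hjlt)
    have : a j < a i := by
      have h1 : a j ≤ a i0 := hmax j (Finset.mem_univ j)
      have h2 : a j ≠ a i0 := by simpa [hA] using hjA
      omega
    nlinarith [Int.toNat_of_nonneg (by positivity : (0:ℤ) ≤ (e i j : ℤ))]
  have hb2 : ∑ j ∈ Finset.univ.filter (fun j => σ j < σ i), (a i - a j) * (e i j : ℤ)
      ≤ ∑ j, (a i - a j) * (e i j : ℤ) := by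
    refine Finset.sum_le_sum_of_subset_of_nonneg (Finset.filter_subset _ _) fun j _ _ => ?_
    have h1 : a j ≤ a i := hai ▸ hmax j (Finset.mem_univ j)
    have h2 : (0:ℤ) ≤ (e i j : ℤ) := by positivity
    nlinarith
  have := hpos i
  rw [hhi] at this
  simp only [nuG] at this
  omega

end nu

section dist
variable (e) in
/-- reachable from `q` in at most `k` steps -/
def RkG (q : Fin n) : ℕ → Fin n → Prop
  | 0 => fun i => i = q
  | (k+1) => fun i => RkG q k i ∨ ∃ j, RkG q k j ∧ 0 < e j i

variable (e) in
noncomputable def dG (q : Fin n) (i : Fin n) : ℕ := sInf {k | RkG e q k i}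

variable (e) in
noncomputable def CG (q : Fin n) : ℕ := Finset.univ.sup (dG e q)

variable (e) in
def MG : ℕ := (∑ i, ∑ j, e i j) + 2

variable (e) in
noncomputable def wG (q : Fin n) : Fin n → ℤ := fun i => (MG e : ℤ) ^ (CG e q - dG e q i)

variable {q : Fin n}
variable (hconn : ∀ i j : Fin n, Relation.ReflTransGen (fun a b => 0 < e a b) i j)
include hconn

theorem RkG_exists (i : Fin n) : ∃ k, RkG e q k i := by
  have h := hconn q i
  induction h with
  | refl => exact ⟨0, rfl⟩
  | tail hab hbc ih =>
    obtain ⟨k, hk⟩ := ih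
    exact ⟨k + 1, Or.inr ⟨_, hk, hbc⟩⟩

theorem dG_mem (i : Fin n) : RkG e q (dG e q i) i :=
  Nat.sInf_mem (RkG_exists hconn i)

omit hconn
theorem dG_q_eq : dG e q q = 0 :=
  Nat.sInf_eq_zero.mpr (Or.inl rfl)
include hconn

theorem dG_eq_zero {i : Fin n} (h : dG e q i = 0) : i = q := by
  have h2 := dG_mem (q := q) hconn i
  rw [h] at h2
  exact h2

theorem dG_step {i : Fin n} (hi : i ≠ q) : ∃ j, 0 < e j i ∧ dG e q j < dG e q i := by
  have hmem := dG_mem (q := q) hconn i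
  have h0 : dG e q i ≠ 0 := fun h => hi (dG_eq_zero hconn h)
  obtain ⟨t, ht⟩ := Nat.exists_eq_succ_of_ne_zero h0
  rw [ht] at hmem
  rcases hmem with h | ⟨j, hj, hje⟩
  · exfalso
    have hle : dG e q i ≤ t := Nat.sInf_le h
    omega
  · exact ⟨j, hje, by
      have : dG e q j ≤ t := Nat.sInf_le hj
      omega⟩

omit hconn

theorem dG_le_C (i : Fin n) : dG e q i ≤ CG e q := Finset.le_sup (Finset.mem_univ i)

theorem MG_pos : (0:ℤ) < (MG e : ℤ) := by
  have : 0 < MG e := by simp [MG]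
  exact_mod_cast this

theorem wG_pos (i : Fin n) : 0 < wG e q i := pow_pos MG_pos _

theorem wG_mono {i j : Fin n} (h : dG e q i ≤ dG e q j) : wG e q j ≤ wG e q i := by
  apply pow_le_pow_right₀ (by have := MG_pos (e := e); omega)
  omega

theorem wG_step {i j : Fin n} (h : dG e q j < dG e q i) :
    (MG e : ℤ) * wG e q i ≤ wG e q j := by
  have h1 : CG e q - dG e q i + 1 ≤ CG e q - dG e q j := by
    have := dG_le_C (e := e) (q := q) i
    omega
  calc (MG e : ℤ) * wG e q i = (MG e : ℤ) ^ (CG e q - dG e q i + 1) := by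
        show (MG e : ℤ) * (MG e : ℤ) ^ (CG e q - dG e q i) = _
        rw [pow_succ]; ring
    _ ≤ (MG e : ℤ) ^ (CG e q - dG e q j) :=
        pow_le_pow_right₀ (by have := MG_pos (e := e); omega) h1
    _ = wG e q j := rfl

include hconn
/-- Key estimate: the weighted cut sum of any nonempty set avoiding `q` is positive. -/
theorem cut_pos {S : Finset (Fin n)} (hSne : S.Nonempty) (hq : q ∉ S)
    (hsym : ∀ i j, e i j = e j i) :
    0 < ∑ p ∈ S ×ˢ Sᶜ, (e p.1 p.2 : ℤ) * (wG e q p.2 - wG e q p.1) := by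
  obtain ⟨i0, hi0S, hi0min⟩ := Finset.exists_min_image S (dG e q) hSne
  have hi0q : i0 ≠ q := fun h => hq (h ▸ hi0S)
  obtain ⟨j0, hj0e, hj0d⟩ := dG_step hconn hi0q
  have hj0S : j0 ∉ S := fun h => absurd (hi0min j0 h) (by omega)
  have hPpos : 0 < wG e q i0 := wG_pos i0
  have hp0 : (i0, j0) ∈ S ×ˢ Sᶜ := by
    simp [Finset.mem_product, hi0S, hj0S]
  have hgood : (MG e : ℤ) * wG e q i0 - wG e q i0
      ≤ (e i0 j0 : ℤ) * (wG e q j0 - wG e q i0) := by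
    have h1 : (MG e : ℤ) * wG e q i0 ≤ wG e q j0 := wG_step hj0d
    have h2 : (1:ℤ) ≤ (e i0 j0 : ℤ) := by
      have : 0 < e i0 j0 := by rw [hsym]; exact hj0e
      exact_mod_cast this
    have hM2 : (2:ℤ) ≤ (MG e : ℤ) := by
      have : 2 ≤ MG e := by simp [MG]
      exact_mod_cast this
    have h3 : (0:ℤ) ≤ wG e q j0 - wG e q i0 := by nlinarith
    nlinarith
  have hEb : ∑ p ∈ (S ×ˢ Sᶜ).erase (i0, j0), (e p.1 p.2 : ℤ)
      ≤ ((∑ i, ∑ j, e i j : ℕ) : ℤ) := by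
    push_cast
    calc ∑ p ∈ (S ×ˢ Sᶜ).erase (i0, j0), (e p.1 p.2 : ℤ)
        ≤ ∑ p ∈ Finset.univ ×ˢ Finset.univ, (e p.1 p.2 : ℤ) := by
          apply Finset.sum_le_sum_of_subset_of_nonneg
          · intro p _; simp [Finset.mem_product]
          · intro p _ _; positivity
      _ = ∑ i, ∑ j, (e i j : ℤ) := Finset.sum_product _ _ _
  have hrest : -(((∑ i, ∑ j, e i j : ℕ) : ℤ) * wG e q i0)
      ≤ ∑ p ∈ (S ×ˢ Sᶜ).erase (i0, j0), (e p.1 p.2 : ℤ) * (wG e q p.2 - wG e q p.1) := by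
    have hterm : ∀ p ∈ (S ×ˢ Sᶜ).erase (i0, j0),
        -((e p.1 p.2 : ℤ) * wG e q i0) ≤ (e p.1 p.2 : ℤ) * (wG e q p.2 - wG e q p.1) := by
      rintro ⟨i, j⟩ hp
      have hiS : i ∈ S := (Finset.mem_product.mp (Finset.mem_of_mem_erase hp)).1
      have hwi : wG e q i ≤ wG e q i0 := wG_mono (hi0min i hiS)
      have hwj : (0:ℤ) ≤ wG e q j := le_of_lt (wG_pos j)
      have he : (0:ℤ) ≤ (e i j : ℤ) := by positivity
      nlinarith
    calc -(((∑ i, ∑ j, e i j : ℕ) : ℤ) * wG e q i0)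
        ≤ -((∑ p ∈ (S ×ˢ Sᶜ).erase (i0, j0), (e p.1 p.2 : ℤ)) * wG e q i0) := by
          nlinarith
      _ = ∑ p ∈ (S ×ˢ Sᶜ).erase (i0, j0), -((e p.1 p.2 : ℤ) * wG e q i0) := by
          rw [Finset.sum_mul, ← Finset.sum_neg_distrib]
      _ ≤ _ := Finset.sum_le_sum hterm
  have hsum : ∑ p ∈ S ×ˢ Sᶜ, (e p.1 p.2 : ℤ) * (wG e q p.2 - wG e q p.1)
      = (∑ p ∈ (S ×ˢ Sᶜ).erase (i0, j0), (e p.1 p.2 : ℤ) * (wG e q p.2 - wG e q p.1))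
        + (e i0 j0 : ℤ) * (wG e q j0 - wG e q i0) :=
    (Finset.sum_erase_add _ _ hp0).symm
  have hM : (MG e : ℤ) = ((∑ i, ∑ j, e i j : ℕ) : ℤ) + 2 := by simp [MG]
  have hexp : (MG e : ℤ) * wG e q i0 - wG e q i0
      = ((∑ i, ∑ j, e i j : ℕ) : ℤ) * wG e q i0 + wG e q i0 := by rw [hM]; ring
  rw [hsum]
  linarith
end dist

section comb

theorem lap_comb_apply (hs : ∀ i j, e i j = e j i) (hl : ∀ i, e i i = 0)
    (a : Fin n → ℤ) (j : Fin n) :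
    (∑ i, a i • lapG e i) j = ∑ i, (a j - a i) * (e i j : ℤ) := by
  have hterm : ∀ i, a i * lapG e i j
      = (if i = j then a j * ∑ k, (e j k : ℤ) else 0) - a i * (e i j : ℤ) := by
    intro i
    by_cases hij : i = j
    · subst hij; simp [lapG, hl i]
    · have hji : j ≠ i := fun h => hij h.symm
      simp [lapG, hji, hij]
  have hcol : ∑ i, (e i j : ℤ) = ∑ k, (e j k : ℤ) :=
    Finset.sum_congr rfl (fun i _ => by rw [hs i j])
  calc (∑ i, a i • lapG e i) j = ∑ i, a i * lapG e i j := by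
        simp [Finset.sum_apply]
    _ = (∑ i, (if i = j then a j * ∑ k, (e j k : ℤ) else 0)) - ∑ i, a i * (e i j : ℤ) := by
        simp [hterm, Finset.sum_sub_distrib]
    _ = a j * (∑ k, (e j k : ℤ)) - ∑ i, a i * (e i j : ℤ) := by
        rw [Finset.sum_ite_eq' Finset.univ j]
        simp
    _ = ∑ i, (a j - a i) * (e i j : ℤ) := by
        simp only [sub_mul, Finset.sum_sub_distrib, ← Finset.mul_sum, hcol]

/-- Symmetrization identity: weighted sum of the `S`-toppling equals minus the cut sum. -/
theorem weight_topple_sum (hs : ∀ i j, e i j = e j i) (q : Fin n) (S : Finset (Fin n)) :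
    ∑ j, wG e q j * (∑ i, ((if j ∈ S then (1:ℤ) else 0) - (if i ∈ S then (1:ℤ) else 0)) * (e i j : ℤ))
      = - ∑ p ∈ S ×ˢ Sᶜ, (e p.1 p.2 : ℤ) * (wG e q p.2 - wG e q p.1) := by
  set w := wG e q with hw
  set χ : Fin n → ℤ := fun i => if i ∈ S then (1:ℤ) else 0 with hχ
  set F : Fin n × Fin n → ℤ := fun p => w p.2 * ((χ p.2 - χ p.1) * (e p.1 p.2 : ℤ)) with hFdef
  have hD : ∑ j, w j * (∑ i, (χ j - χ i) * (e i j : ℤ))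
      = ∑ p ∈ Finset.univ ×ˢ Finset.univ, F p := by
    rw [Finset.sum_product]
    rw [Finset.sum_comm]
    refine Finset.sum_congr rfl fun j _ => ?_
    rw [Finset.mul_sum]
  have hswap : ∑ p ∈ Finset.univ ×ˢ Finset.univ, F p
      = ∑ p ∈ Finset.univ ×ˢ Finset.univ, F (p.2, p.1) := by
    apply Finset.sum_nbij' (fun p : Fin n × Fin n => (p.2, p.1)) (fun p : Fin n × Fin n => (p.2, p.1))
    all_goals intros
    all_goals simp
  have hG : ∀ p : Fin n × Fin n, F p + F (p.2, p.1)
      = ((χ p.2 - χ p.1) * (w p.2 - w p.1)) * (e p.1 p.2 : ℤ) := by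
    rintro ⟨i, j⟩
    simp only [hFdef]
    rw [hs j i]
    ring
  have hprodfil : S ×ˢ Sᶜ
      = (Finset.univ ×ˢ Finset.univ).filter (fun p : Fin n × Fin n => p.1 ∈ S ∧ p.2 ∉ S) := by
    ext p
    simp [Finset.mem_product]
  have hprodfil2 : Sᶜ ×ˢ S
      = (Finset.univ ×ˢ Finset.univ).filter (fun p : Fin n × Fin n => p.2 ∈ S ∧ p.1 ∉ S) := by
    ext p
    simp [Finset.mem_product, and_comm]
  have hCS2 : ∑ p ∈ S ×ˢ Sᶜ, (e p.1 p.2 : ℤ) * (w p.2 - w p.1)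
      = ∑ p ∈ Sᶜ ×ˢ S, (e p.1 p.2 : ℤ) * (w p.1 - w p.2) := by
    refine Finset.sum_nbij' (fun p => (p.2, p.1)) (fun p => (p.2, p.1))
      (fun a ha => ?_) (fun a ha => ?_) (fun a ha => rfl) (fun a ha => rfl) (fun a ha => ?_)
    · simp_all [Finset.mem_product]
    · simp_all [Finset.mem_product]
    · show (e a.1 a.2 : ℤ) * (w a.2 - w a.1) = (e a.2 a.1 : ℤ) * (w a.2 - w a.1)
      rw [hs a.1 a.2]
  have htwo : (2:ℤ) * (∑ p ∈ Finset.univ ×ˢ Finset.univ, F p)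
      = -(2 * ∑ p ∈ S ×ˢ Sᶜ, (e p.1 p.2 : ℤ) * (w p.2 - w p.1)) := by
    have h1 : (2:ℤ) * (∑ p ∈ Finset.univ ×ˢ Finset.univ, F p)
        = ∑ p ∈ Finset.univ ×ˢ Finset.univ, (F p + F (p.2, p.1)) := by
      rw [Finset.sum_add_distrib, ← hswap]
      ring
    rw [h1]
    have h2 : ∀ p : Fin n × Fin n,
        F p + F (p.2, p.1)
        = -((if p.1 ∈ S ∧ p.2 ∉ S then (e p.1 p.2 : ℤ) * (w p.2 - w p.1) else 0))
          - (if p.2 ∈ S ∧ p.1 ∉ S then (e p.1 p.2 : ℤ) * (w p.1 - w p.2) else 0) := by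
      rintro ⟨i, j⟩
      rw [hG ⟨i, j⟩]
      simp only [hχ]
      by_cases hi : i ∈ S <;> by_cases hj : j ∈ S <;> simp [hi, hj] <;> ring
    rw [Finset.sum_congr rfl (fun p _ => h2 p), Finset.sum_sub_distrib]
    have e1 : ∑ p ∈ Finset.univ ×ˢ Finset.univ,
        -(if p.1 ∈ S ∧ p.2 ∉ S then (e p.1 p.2 : ℤ) * (w p.2 - w p.1) else 0)
        = -∑ p ∈ S ×ˢ Sᶜ, (e p.1 p.2 : ℤ) * (w p.2 - w p.1) := by
      rw [hprodfil, Finset.sum_filter, ← Finset.sum_neg_distrib]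
    have e2 : ∑ p ∈ Finset.univ ×ˢ Finset.univ,
        (if p.2 ∈ S ∧ p.1 ∉ S then (e p.1 p.2 : ℤ) * (w p.1 - w p.2) else 0)
        = ∑ p ∈ Sᶜ ×ˢ S, (e p.1 p.2 : ℤ) * (w p.1 - w p.2) := by
      rw [hprodfil2, Finset.sum_filter]
    rw [e1, e2, ← hCS2]
    ring
  have hfinal : ∑ j, w j * (∑ i, (χ j - χ i) * (e i j : ℤ))
      = - ∑ p ∈ S ×ˢ Sᶜ, (e p.1 p.2 : ℤ) * (w p.2 - w p.1) := by
    rw [hD]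
    omega
  exact hfinal

/-- Toppling an unburnable set strictly increases the weight while preserving
effectiveness away from `q`. -/
theorem topple_lemma (hs : ∀ i j, e i j = e j i) (hl : ∀ i, e i i = 0)
    (hconn : ∀ i j : Fin n, Relation.ReflTransGen (fun a b => 0 < e a b) i j)
    {q : Fin n} {g : Fin n → ℤ} {S : Finset (Fin n)} (hSne : S.Nonempty) (hq : q ∉ S)
    (hstuck : ∀ i ∈ S, (∑ j ∈ Sᶜ, (e i j : ℤ)) ≤ g i) :
    ∃ g' : Fin n → ℤ, topG e g' g ∧ (∀ i, i ≠ q → 0 ≤ g i → 0 ≤ g' i) ∧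
      ∑ i, wG e q i * g i < ∑ i, wG e q i * g' i := by
  set χ : Fin n → ℤ := fun i => if i ∈ S then (1:ℤ) else 0 with hχ
  set t : Fin n → ℤ := ∑ i, χ i • lapG e i with ht
  have htval : ∀ j, t j = ∑ i, (χ j - χ i) * (e i j : ℤ) := fun j =>
    lap_comb_apply hs hl χ j
  refine ⟨g - t, ?_, ?_, ?_⟩
  · refine ⟨fun i => -(χ i), ?_⟩
    have h0 : g - t - g = -t := by abel
    rw [h0, ht, ← Finset.sum_neg_distrib]
    refine Finset.sum_congr rfl fun i _ => ?_
    simp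
  · intro j hjq hgj
    by_cases hjS : j ∈ S
    · have hval : t j = ∑ i, (if i ∈ Sᶜ then (e i j : ℤ) else 0) := by
        rw [htval j]
        refine Finset.sum_congr rfl fun i _ => ?_
        by_cases hi : i ∈ S <;> simp [hχ, hi, hjS]
      have hval2 : ∑ i, (if i ∈ Sᶜ then (e i j : ℤ) else 0) = ∑ i ∈ Sᶜ, (e i j : ℤ) := by
        rw [← Finset.sum_filter]
        congr 1
        ext i; simp
      have hb := hstuck j hjS
      have hsymsum : ∑ i ∈ Sᶜ, (e i j : ℤ) = ∑ i ∈ Sᶜ, (e j i : ℤ) :=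
        Finset.sum_congr rfl fun i _ => by rw [hs i j]
      simp only [Pi.sub_apply]
      omega
    · have hval : t j ≤ 0 := by
        rw [htval j]
        apply Finset.sum_nonpos
        intro i _
        have h1 : (0:ℤ) ≤ (e i j : ℤ) := by positivity
        have h2 : χ j - χ i ≤ 0 := by
          simp only [hχ, hjS]
          by_cases hi : i ∈ S <;> simp [hi]
        nlinarith
      simp only [Pi.sub_apply]
      omega
  · have hphi : ∑ i, wG e q i * (g - t) i = ∑ i, wG e q i * g i - ∑ j, wG e q j * t j := by
      simp [Pi.sub_apply, mul_sub, Finset.sum_sub_distrib]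
    have hkey : ∑ j, wG e q j * t j
        = - ∑ p ∈ S ×ˢ Sᶜ, (e p.1 p.2 : ℤ) * (wG e q p.2 - wG e q p.1) := by
      have hrw : ∑ j, wG e q j * t j = ∑ j, wG e q j *
          (∑ i, ((if j ∈ S then (1:ℤ) else 0) - (if i ∈ S then (1:ℤ) else 0)) * (e i j : ℤ)) := by
        refine Finset.sum_congr rfl fun j _ => ?_
        rw [htval j]
      rw [hrw]
      exact weight_topple_sum hs q S
    have hcut := cut_pos (q := q) hconn hSne hq hs
    rw [hphi, hkey]
    linarith


theorem exists_nonneg_rep (hs : ∀ i j, e i j = e j i) (hl : ∀ i, e i i = 0)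
    (hconn : ∀ i j : Fin n, Relation.ReflTransGen (fun a b => 0 < e a b) i j)
    (q : Fin n) (f : Fin n → ℤ) :
    ∃ g : Fin n → ℤ, topG e g f ∧ ∀ i, i ≠ q → 0 ≤ g i := by
  set z : Fin n → ℤ := ∑ i, (-(wG e q i)) • lapG e i with hz
  have hzval : ∀ j, z j = ∑ i, (wG e q i - wG e q j) * (e i j : ℤ) := by
    intro j
    rw [hz, lap_comb_apply hs hl]
    refine Finset.sum_congr rfl fun i _ => ?_
    ring
  have hzpos : ∀ j, j ≠ q → 1 ≤ z j := by
    intro j hjq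
    have hq : q ∉ ({j} : Finset (Fin n)) := Finset.notMem_singleton.mpr (Ne.symm hjq)
    have hcut := cut_pos (q := q) hconn (S := ({j} : Finset (Fin n)))
      ⟨j, Finset.mem_singleton_self j⟩ hq hs
    have h1 : ∑ p ∈ ({j} : Finset (Fin n)) ×ˢ ({j} : Finset (Fin n))ᶜ,
        (e p.1 p.2 : ℤ) * (wG e q p.2 - wG e q p.1)
        = ∑ i ∈ ({j} : Finset (Fin n))ᶜ, (e j i : ℤ) * (wG e q i - wG e q j) := by
      rw [Finset.sum_product, Finset.sum_singleton]
    have h2 : z j = ∑ i ∈ ({j} : Finset (Fin n))ᶜ, (e j i : ℤ) * (wG e q i - wG e q j) := by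
      rw [hzval j]
      rw [show ∑ i, (wG e q i - wG e q j) * (e i j : ℤ)
          = ∑ i, (e j i : ℤ) * (wG e q i - wG e q j) from
        Finset.sum_congr rfl fun i _ => by rw [hs i j]; ring]
      rw [← Finset.sum_compl_add_sum ({j} : Finset (Fin n))]
      simp [hl j]
    omega
  refine ⟨f + (∑ i, |f i|) • z, ⟨fun i => (∑ i, |f i|) * (-(wG e q i)), ?_⟩, ?_⟩
  · have h0 : f + (∑ i, |f i|) • z - f = (∑ i, |f i|) • z := by abel
    rw [h0, hz, Finset.smul_sum]
    refine Finset.sum_congr rfl fun i _ => ?_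
    rw [smul_smul]
  · intro i hiq
    have hK : (0:ℤ) ≤ ∑ i, |f i| := Finset.sum_nonneg fun i _ => abs_nonneg _
    have h1 : |f i| ≤ ∑ i, |f i| :=
      Finset.single_le_sum (fun i _ => abs_nonneg (f i)) (Finset.mem_univ i)
    have h2 : -|f i| ≤ f i := neg_abs_le (f i)
    have hzi := hzpos i hiq
    have h3 : (∑ i, |f i|) * 1 ≤ (∑ i, |f i|) * z i := mul_le_mul_of_nonneg_left hzi hK
    rw [mul_one] at h3
    simp only [Pi.add_apply, Pi.smul_apply, smul_eq_mul]
    linarith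

end comb

theorem exists_max_rep (hs : ∀ i j, e i j = e j i) (hl : ∀ i, e i i = 0)
    (hconn : ∀ i j : Fin n, Relation.ReflTransGen (fun a b => 0 < e a b) i j)
    (q : Fin n) (f : Fin n → ℤ) :
    ∃ g : Fin n → ℤ, topG e g f ∧ (∀ i, i ≠ q → 0 ≤ g i) ∧
      ∀ g' : Fin n → ℤ, topG e g' f → (∀ i, i ≠ q → 0 ≤ g' i) →
        ∑ i, wG e q i * g' i ≤ ∑ i, wG e q i * g i := by
  obtain ⟨g0, hg0top, hg0pos⟩ := exists_nonneg_rep hs hl hconn q f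
  have hbdd : ∃ b : ℤ, ∀ v : ℤ,
      (∃ g : Fin n → ℤ, (topG e g f ∧ ∀ i, i ≠ q → 0 ≤ g i) ∧ ∑ i, wG e q i * g i = v) →
      v ≤ b := by
    refine ⟨(MG e : ℤ) ^ (CG e q) * (∑ i, f i), ?_⟩
    rintro v ⟨g, ⟨hgtop, hgpos⟩, rfl⟩
    have hdeg : ∑ i, g i = ∑ i, f i := deg_top hl hgtop
    calc ∑ i, wG e q i * g i ≤ ∑ i, (MG e : ℤ) ^ (CG e q) * g i := by
          refine Finset.sum_le_sum fun i _ => ?_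
          by_cases hiq : i = q
          · have h0 : wG e q i = (MG e : ℤ) ^ (CG e q) := by
              show (MG e : ℤ) ^ (CG e q - dG e q i) = _
              rw [hiq, dG_q_eq, Nat.sub_zero]
            rw [h0]
          · have h1 : wG e q i ≤ (MG e : ℤ) ^ (CG e q) :=
              pow_le_pow_right₀ (by have := MG_pos (e := e); omega) (Nat.sub_le _ _)
            exact mul_le_mul_of_nonneg_right h1 (hgpos i hiq)
      _ = (MG e : ℤ) ^ (CG e q) * ∑ i, g i := by rw [Finset.mul_sum]
      _ = _ := by rw [hdeg]
  have hex : ∃ v : ℤ, ∃ g : Fin n → ℤ,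
      (topG e g f ∧ ∀ i, i ≠ q → 0 ≤ g i) ∧ ∑ i, wG e q i * g i = v :=
    ⟨_, g0, ⟨hg0top, hg0pos⟩, rfl⟩
  obtain ⟨v0, ⟨g, hg, hgv⟩, hub⟩ := Int.exists_greatest_of_bdd hbdd hex
  exact ⟨g, hg.1, hg.2, fun g' h1 h2 => hgv ▸ hub _ ⟨g', ⟨h1, h2⟩, rfl⟩⟩

theorem burning (hn : 1 ≤ n) (hs : ∀ i j, e i j = e j i) (hl : ∀ i, e i i = 0)
    (hconn : ∀ i j : Fin n, Relation.ReflTransGen (fun a b => 0 < e a b) i j)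
    {q : Fin n} {f g : Fin n → ℤ} (hgtop : topG e g f) (hgpos : ∀ i, i ≠ q → 0 ≤ g i)
    (hgmax : ∀ g' : Fin n → ℤ, topG e g' f → (∀ i, i ≠ q → 0 ≤ g' i) →
        ∑ i, wG e q i * g' i ≤ ∑ i, wG e q i * g i) :
    ∀ k, k < n → ∃ w : ℕ → Fin n, w 0 = q ∧
      ((Finset.range (k+1)).image w).card = k + 1 ∧
      ∀ l, l ≤ k → l ≠ 0 → w l ∉ (Finset.range l).image w ∧
        g (w l) < ∑ j ∈ (Finset.range l).image w, (e (w l) j : ℤ) := by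
  intro k
  induction k with
  | zero =>
    intro _
    exact ⟨fun _ => q, rfl, by simp, fun l hl0 hl1 => absurd (Nat.le_zero.mp hl0) hl1⟩
  | succ k ih =>
    intro hk1
    obtain ⟨w, hw0, hwcard, hwprop⟩ := ih (by omega)
    set B : Finset (Fin n) := (Finset.range (k+1)).image w with hBdef
    have hqB : q ∈ B := by
      rw [hBdef]
      exact Finset.mem_image.mpr ⟨0, by simp, hw0⟩
    have hBcard : B.card < n := by omega
    -- there must be a burnable vertex outside B
    have hburn : ∃ i, i ∉ B ∧ g i < ∑ j ∈ B, (e i j : ℤ) := by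
      by_contra hstuck
      push_neg at hstuck
      have hSne : (Bᶜ : Finset (Fin n)).Nonempty := by
        rw [← Finset.card_pos, Finset.card_compl]
        simp only [Fintype.card_fin]
        omega
      have hqS : q ∉ (Bᶜ : Finset (Fin n)) := by simp [hqB]
      have hstuck' : ∀ i ∈ (Bᶜ : Finset (Fin n)), (∑ j ∈ (Bᶜ : Finset (Fin n))ᶜ, (e i j : ℤ)) ≤ g i := by
        intro i hi
        rw [compl_compl]
        exact hstuck i (Finset.mem_compl.mp hi)
      obtain ⟨g', hg'top, hg'pos, hg'phi⟩ := topple_lemma hs hl hconn hSne hqS hstuck'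
      have := hgmax g' (top_trans hg'top hgtop) (fun i hi => hg'pos i hi (hgpos i hi))
      omega
    obtain ⟨i, hiB, hilt⟩ := hburn
    refine ⟨fun l => if l = k + 1 then i else w l, by simp [hw0], ?_, ?_⟩
    · have himg : (Finset.range (k+2)).image (fun l => if l = k + 1 then i else w l)
          = insert i B := by
        rw [Finset.range_add_one, Finset.image_insert]
        simp only [if_pos rfl]
        congr 1
        rw [hBdef]
        refine Finset.image_congr ?_
        intro l hls
        have : l ≠ k + 1 := by simp at hls; omega
        simp [this]
      rw [himg, Finset.card_insert_of_notMem hiB, hwcard]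
    · intro l hlk hl0
      have himgl : ∀ l', l' ≤ k + 1 → (Finset.range l').image (fun l => if l = k + 1 then i else w l)
          = (Finset.range l').image w := by
        intro l' hl'
        refine Finset.image_congr ?_
        intro x hx
        have : x ≠ k + 1 := by simp at hx; omega
        simp [this]
      rw [himgl l (by omega)]
      by_cases hlK : l = k + 1
      · subst hlK
        simp only [if_pos rfl]
        exact ⟨hiB, hilt⟩
      · have hlk' : l ≤ k := by omega
        simp only [if_neg hlK]
        exact hwprop l hlk' hl0


theorem dichotomy (hn : 1 ≤ n) (hs : ∀ i j, e i j = e j i) (hl : ∀ i, e i i = 0)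
    (hconn : ∀ i j : Fin n, Relation.ReflTransGen (fun a b => 0 < e a b) i j)
    (f : Fin n → ℤ) (hne : ¬ effG e f) :
    ∃ σ : Fin n ≃ Fin n, effG e (nuG e σ - f) := by
  have hq0 : 0 < n := hn
  set q : Fin n := ⟨0, hq0⟩ with hqdef
  obtain ⟨g, hgtop, hgpos, hgmax⟩ := exists_max_rep hs hl hconn q f
  obtain ⟨w, hw0, hwcard, hwprop⟩ :=
    burning hn hs hl hconn hgtop hgpos hgmax (n-1) (by omega)
  have hrange : Finset.range (n - 1 + 1) = Finset.range n := by congr 1; omega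
  rw [hrange] at hwcard
  -- w is injective on range n
  have hinjOn : Set.InjOn w (Finset.range n : Finset ℕ) := by
    rw [← Finset.card_image_iff]
    rw [hwcard, Finset.card_range]
    omega
  have hinj : Function.Injective (fun a : Fin n => w a.val) := by
    intro a b hab
    have := hinjOn (by simp [a.isLt]) (by simp [b.isLt]) hab
    exact Fin.ext this
  let π : Fin n ≃ Fin n := Equiv.ofBijective _ ((Finite.injective_iff_bijective).mp hinj)
  set σ : Fin n ≃ Fin n := π.symm with hσdef
  have hπ : ∀ a : Fin n, π a = w a.val := fun a => rfl
  have hσw : ∀ a : Fin n, σ (w a.val) = a := by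
    intro a
    rw [← hπ a, hσdef]
    exact π.symm_apply_apply a
  have hπσ : ∀ j, w ((σ j : ℕ)) = j := by
    intro j
    have := π.apply_symm_apply j
    rw [hπ (π.symm j)] at this
    exact this
  have hσq : σ q = ⟨0, hq0⟩ := by
    have := hσw ⟨0, hq0⟩
    simp only [Fin.val_mk] at this
    rw [hw0] at this
    exact this
  -- the filter below an element is the image of earlier vertices
  have hfil : ∀ i : Fin n, Finset.univ.filter (fun j => σ j < σ i)
      = (Finset.range ((σ i : ℕ))).image w := by
    intro i
    ext j
    simp only [Finset.mem_filter, Finset.mem_univ, true_and, Finset.mem_image,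
      Finset.mem_range]
    constructor
    · intro hj
      exact ⟨(σ j : ℕ), hj, hπσ j⟩
    · rintro ⟨l, hl, rfl⟩
      have hln : l < n := lt_trans hl (σ i).isLt
      have : σ (w l) = ⟨l, hln⟩ := by
        have := hσw ⟨l, hln⟩
        simpa using this
      rw [Fin.lt_def, this]
      exact hl
  have hnuq : nuG e σ q = -1 := by
    rw [nuG, hfil q, hσq]
    simp
  have hnu_ge : ∀ i, i ≠ q → g i ≤ nuG e σ i := by
    intro i hiq
    have hk0 : (σ i : ℕ) ≠ 0 := by
      intro h0
      apply hiq
      have : σ i = ⟨0, hq0⟩ := Fin.ext h0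
      rw [← hπσ i, this, hw0]
    have hprop := hwprop (σ i : ℕ) (by have := (σ i).isLt; omega) hk0
    rw [hπσ i] at hprop
    rw [nuG, hfil i]
    have := hprop.2
    omega
  by_cases hgq : 0 ≤ g q
  · exact absurd ⟨g, top_symm hgtop, fun i => by
      by_cases h : i = q
      · rw [h]; exact hgq
      · exact hgpos i h⟩ hne
  · refine ⟨σ, nuG e σ - g, ?_, ?_⟩
    · rw [topG_iff]
      have h0 : (nuG e σ - f) - (nuG e σ - g) = g - f := by abel
      rw [h0]
      exact (topG_iff e).mp hgtop
    · intro i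
      simp only [Pi.sub_apply]
      by_cases h : i = q
      · rw [h, hnuq]
        omega
      · have := hnu_ge i h
        omega

variable (e)

def rkSet (f : Fin n → ℤ) : Set ℤ :=
  {d : ℤ | ∃ lam : Fin n → ℤ, (∀ i, 0 ≤ lam i) ∧ (∑ i, lam i) = d ∧ ¬ effG e (f - lam)}

theorem rankG_eq (f : Fin n → ℤ) : rankG e f = sInf (rkSet e f) - 1 := rfl

theorem rkSet_bdd (f : Fin n → ℤ) : ∀ d ∈ rkSet e f, (0:ℤ) ≤ d := by
  rintro d ⟨lam, hpos, rfl, -⟩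
  exact Finset.sum_nonneg fun i _ => hpos i

theorem rkSet_nonempty (hn : 1 ≤ n) (hl : ∀ i, e i i = 0) (f : Fin n → ℤ) :
    (rkSet e f).Nonempty := by
  set c : ℤ := (∑ i, |f i|) + 1 with hc
  have hc1 : 1 ≤ c := by
    have : 0 ≤ ∑ i, |f i| := Finset.sum_nonneg fun i _ => abs_nonneg _
    omega
  refine ⟨∑ _i : Fin n, c, fun _ => c, fun i => ?_, rfl, ?_⟩
  · show (0:ℤ) ≤ c
    omega
  · intro heff
    have hd := eff_nonneg_deg hl heff
    have h1 : ∑ i, (f - fun _ => c : Fin n → ℤ) i = (∑ i, f i) - n * c := by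
      simp only [Pi.sub_apply, Finset.sum_sub_distrib, Finset.sum_const, Finset.card_univ,
        Fintype.card_fin, nsmul_eq_mul]
    rw [h1] at hd
    have h2 : ∑ i, f i ≤ ∑ i, |f i| := Finset.sum_le_sum fun i _ => le_abs_self _
    have h3 : (1:ℤ) * c ≤ (n:ℤ) * c := by
      have h4 : (1:ℤ) ≤ (n:ℤ) := by exact_mod_cast hn
      exact mul_le_mul_of_nonneg_right h4 (by omega)
    omega

theorem rkSet_attained (hn : 1 ≤ n) (hl : ∀ i, e i i = 0) (f : Fin n → ℤ) :
    sInf (rkSet e f) ∈ rkSet e f :=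
  Int.csInf_mem (rkSet_nonempty e hn hl f) ⟨0, fun d hd => rkSet_bdd e f d hd⟩

theorem rr_ineq (hn : 1 ≤ n)
    (hs : ∀ i j, e i j = e j i) (hl : ∀ i, e i i = 0)
    (hconn : ∀ i j : Fin n, Relation.ReflTransGen (fun a b => 0 < e a b) i j)
    (m : ℕ) (hm : 2 * m = ∑ i, ∑ j, e i j) (f : Fin n → ℤ) :
    rankG e f + 1 ≤ (rankG e ((fun i => (∑ k, (e i k : ℤ)) - 2) - f) + 1)
      + (∑ i, f i) + (n : ℤ) - (m : ℤ) := by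
  set κ : Fin n → ℤ := fun i => (∑ k, (e i k : ℤ)) - 2 with hκdef
  obtain ⟨lam', hl'pos, hl'deg, hl'ne⟩ := rkSet_attained e hn hl (κ - f)
  obtain ⟨σ, hσeff⟩ := dichotomy hn hs hl hconn (κ - f - lam') hl'ne
  set ν' : Fin n → ℤ := nuG e (σ.trans Fin.revPerm) with hν'
  have hκν : nuG e σ + ν' = κ := nu_add_nu_rev hl hs σ
  have h1 : nuG e σ - (κ - f - lam') = f + lam' - ν' := by rw [← hκν]; abel
  rw [h1] at hσeff
  obtain ⟨g, hgtop, hgpos⟩ := hσeff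
  set lam : Fin n → ℤ := fun i => max (g i - lam' i) 0 with hlam
  have hlampos : ∀ i, 0 ≤ lam i := fun i => le_max_right _ _
  set wv : Fin n → ℤ := lam + lam' - g with hwv
  have hwvpos : ∀ i, 0 ≤ wv i := by
    intro i
    simp only [hwv, Pi.sub_apply, Pi.add_apply, hlam]
    have := le_max_left (g i - lam' i) 0
    omega
  have hnoteff : ¬ effG e (f - lam) := by
    intro heff
    refine nu_not_eff hl hs hn (σ.trans Fin.revPerm) ?_
    have hchain : topG e ν' ((f - lam) + wv) := by
      rw [topG_iff]
      have h2 : ν' - ((f - lam) + wv) = -((f + lam' - ν') - g) := by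
        rw [hwv]; abel
      rw [h2]
      exact neg_mem ((topG_iff e).mp hgtop)
    refine eff_of_top hchain ?_
    exact eff_add_nonneg heff hwvpos
  have hdeg_g : ∑ i, g i = (∑ i, f i) + (∑ i, lam' i) - ∑ i, ν' i := by
    have := deg_top hl hgtop
    simp only [Pi.sub_apply, Pi.add_apply, Finset.sum_sub_distrib, Finset.sum_add_distrib] at this
    omega
  have hdeg_nu : 2 * (∑ i, ν' i) = (∑ i, ∑ j, (e i j : ℤ)) - 2 * n :=
    deg_nu hl hs (σ.trans Fin.revPerm)
  have hmz : (∑ i, ∑ j, (e i j : ℤ)) = 2 * (m:ℤ) := by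
    have h5 : ((∑ i, ∑ j, e i j : ℕ) : ℤ) = ((2 * m : ℕ) : ℤ) := by rw [← hm]
    push_cast at h5
    linarith
  have hlam_le : ∑ i, lam i ≤ ∑ i, g i := by
    refine Finset.sum_le_sum fun i _ => ?_
    have h4 := hgpos i
    have h5 := hl'pos i
    simp only [hlam]
    omega
  have h_in : (∑ i, lam i) ∈ rkSet e f := ⟨lam, hlampos, rfl, hnoteff⟩
  have h_le : sInf (rkSet e f) ≤ ∑ i, lam i :=
    csInf_le ⟨0, fun d hd => rkSet_bdd e f d hd⟩ h_in
  rw [rankG_eq e, rankG_eq e]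
  have hl'deg' : ∑ i, lam' i = sInf (rkSet e (κ - f)) := hl'deg
  omega
end BN

theorem stmt10 (n : ℕ) (hn : 1 ≤ n) (e : Fin n → Fin n → ℕ)
    (hsym : ∀ i j, e i j = e j i) (hloop : ∀ i, e i i = 0)
    (hconn : ∀ i j : Fin n, Relation.ReflTransGen (fun a b => 0 < e a b) i j)
    (m : ℕ) (hm : 2 * m = ∑ i, ∑ j, e i j)
    (f : Fin n → ℤ) :
    rankG e f - rankG e ((fun i => (∑ k, (e i k : ℤ)) - 2) - f) =
      (∑ i, f i) + (n : ℤ) - (m : ℤ) := by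
  set κ : Fin n → ℤ := fun i => (∑ k, (e i k : ℤ)) - 2 with hκ
  have h1 := BN.rr_ineq e hn hsym hloop hconn m hm f
  have h2 := BN.rr_ineq e hn hsym hloop hconn m hm (κ - f)
  have h3 : κ - (κ - f) = f := sub_sub_cancel κ f
  rw [h3] at h2
  have hmz : (∑ i, ∑ j, (e i j : ℤ)) = 2 * (m:ℤ) := by
    have h5 : ((∑ i, ∑ j, e i j : ℕ) : ℤ) = ((2 * m : ℕ) : ℤ) := by rw [← hm]
    push_cast at h5
    linarith
  have h4 : ∑ i, (κ - f) i = 2*(m:ℤ) - 2*(n:ℤ) - ∑ i, f i := by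
    have h6 : ∑ i, (κ - f) i = (∑ i, κ i) - ∑ i, f i := by
      simp [Finset.sum_sub_distrib]
    have h7 : ∑ i, κ i = 2*(m:ℤ) - 2*(n:ℤ) := by
      rw [hκ]
      rw [show ∑ i, (fun i => (∑ k, (e i k : ℤ)) - 2) i
          = (∑ i, ∑ k, (e i k : ℤ)) - 2 * n by
        simp only [Finset.sum_sub_distrib, Finset.sum_const, Finset.card_univ,
          Fintype.card_fin, nsmul_eq_mul]
        ring]
      omega
    omega
  linarith
end

section
/- If f is a configuration on a graph G, mu a nonnegative configuration with rho(f - mu) = rho(f) - deg(mu), and mu' a nonnegative configuration with mu'_j <= mu_j for all j, then rho(f - mu') = rho(f) - deg(mu'). -/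
lemma sum_lapG {n : ℕ} (e : Fin n → Fin n → ℕ) (hloop : ∀ i, e i i = 0) (i : Fin n) :
    ∑ j, lapG e i j = 0 := by
  rw [← Finset.add_sum_erase _ _ (Finset.mem_univ i)]
  have h1 : lapG e i i = ∑ k, (e i k : ℤ) := by simp [lapG]
  have h2 : ∑ j ∈ Finset.univ.erase i, lapG e i j
      = ∑ j ∈ Finset.univ.erase i, -(e i j : ℤ) := by
    apply Finset.sum_congr rfl
    intro j hj
    simp only [Finset.mem_erase] at hj
    simp [lapG, hj.1]
  rw [h1, h2, Finset.sum_neg_distrib]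
  have : ∑ j ∈ Finset.univ.erase i, (e i j : ℤ) = ∑ j, (e i j : ℤ) := by
    rw [← Finset.add_sum_erase Finset.univ (fun j => ((e i j : ℤ))) (Finset.mem_univ i), hloop]
    simp
  rw [this]; ring

lemma deg_topG {n : ℕ} (e : Fin n → Fin n → ℕ) (hloop : ∀ i, e i i = 0)
    {f g : Fin n → ℤ} (h : topG e f g) : ∑ i, f i = ∑ i, g i := by
  obtain ⟨a, ha⟩ := h
  have : ∑ j, (f j - g j) = 0 := by
    have h2 := congrArg (fun v => ∑ j, v j) ha
    simp only [Pi.sub_apply, Finset.sum_apply, Pi.smul_apply, smul_eq_mul] at h2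
    rw [h2, Finset.sum_comm]
    calc ∑ i, ∑ j, a i * lapG e i j = ∑ i : Fin n, a i * ∑ j, lapG e i j := by
          simp [Finset.mul_sum]
      _ = 0 := by simp [sum_lapG e hloop]
  rw [Finset.sum_sub_distrib] at this
  linarith

lemma deg_nonneg_of_eff {n : ℕ} (e : Fin n → Fin n → ℕ) (hloop : ∀ i, e i i = 0)
    {f : Fin n → ℤ} (h : effG e f) : 0 ≤ ∑ i, f i := by
  obtain ⟨g, ht, hg⟩ := h
  rw [deg_topG e hloop ht]
  exact Finset.sum_nonneg fun i _ => hg i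

lemma rank_set_nonempty {n : ℕ} (hn : 1 ≤ n) (e : Fin n → Fin n → ℕ)
    (hloop : ∀ i, e i i = 0) (f : Fin n → ℤ) :
    Set.Nonempty {d : ℤ | ∃ lam : Fin n → ℤ,
      (∀ i, 0 ≤ lam i) ∧ (∑ i, lam i) = d ∧ ¬ effG e (f - lam)} := by
  set m : ℤ := max (∑ i, f i) 0 + 1 with hm
  have hmpos : 0 < m := by
    have : (0:ℤ) ≤ max (∑ i, f i) 0 := le_max_right _ _
    omega
  refine ⟨(n : ℤ) * m, fun _ => m, fun i => le_of_lt hmpos, by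
    simp [Finset.sum_const, Finset.card_univ, mul_comm], ?_⟩
  intro heff
  have hd := deg_nonneg_of_eff e hloop heff
  simp only [Pi.sub_apply, Finset.sum_sub_distrib, Finset.sum_const,
    Finset.card_univ, Fintype.card_fin, nsmul_eq_mul] at hd
  have h1 : (∑ i, f i) < m := by
    have : (∑ i, f i) ≤ max (∑ i, f i) 0 := le_max_left _ _
    omega
  have h2 : m ≤ (n:ℤ) * m := by
    nlinarith [hmpos, (by exact_mod_cast hn : (1:ℤ) ≤ (n:ℤ))]
  omega

lemma rank_set_bddBelow {n : ℕ} (e : Fin n → Fin n → ℕ) (f : Fin n → ℤ) :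
    BddBelow {d : ℤ | ∃ lam : Fin n → ℤ,
      (∀ i, 0 ≤ lam i) ∧ (∑ i, lam i) = d ∧ ¬ effG e (f - lam)} := by
  refine ⟨0, fun d hd => ?_⟩
  obtain ⟨lam, h1, h2, _⟩ := hd
  rw [← h2]
  exact Finset.sum_nonneg fun i _ => h1 i

lemma rank_sub_ge {n : ℕ} (hn : 1 ≤ n) (e : Fin n → Fin n → ℕ)
    (hloop : ∀ i, e i i = 0) (f ν : Fin n → ℤ) (hν : ∀ i, 0 ≤ ν i) :
    rankG e f - ∑ i, ν i ≤ rankG e (f - ν) := by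
  unfold rankG
  have key : sInf {d : ℤ | ∃ lam : Fin n → ℤ,
      (∀ i, 0 ≤ lam i) ∧ (∑ i, lam i) = d ∧ ¬ effG e (f - lam)} - ∑ i, ν i
      ≤ sInf {d : ℤ | ∃ lam : Fin n → ℤ,
      (∀ i, 0 ≤ lam i) ∧ (∑ i, lam i) = d ∧ ¬ effG e (f - ν - lam)} := by
    apply le_csInf (rank_set_nonempty hn e hloop (f - ν))
    intro d hd
    obtain ⟨lam, h1, h2, h3⟩ := hd
    have hmem : d + ∑ i, ν i ∈ {d : ℤ | ∃ lam : Fin n → ℤ,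
        (∀ i, 0 ≤ lam i) ∧ (∑ i, lam i) = d ∧ ¬ effG e (f - lam)} := by
      refine ⟨fun i => lam i + ν i, fun i => add_nonneg (h1 i) (hν i), by
        rw [Finset.sum_add_distrib, h2], ?_⟩
      have : (f - fun i => lam i + ν i) = f - ν - lam := by
        funext j; simp; ring
      rw [this]; exact h3
    have := csInf_le (rank_set_bddBelow e f) hmem
    linarith
  linarith

theorem stmt12 (n : ℕ) (hn : 1 ≤ n) (e : Fin n → Fin n → ℕ)
    (hsym : ∀ i j, e i j = e j i) (hloop : ∀ i, e i i = 0)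
    (hconn : ∀ i j : Fin n, Relation.ReflTransGen (fun a b => 0 < e a b) i j)
    (f μ μ' : Fin n → ℤ) (hμ : ∀ i, 0 ≤ μ i)
    (hrank : rankG e (f - μ) = rankG e f - ∑ i, μ i)
    (hμ' : ∀ i, 0 ≤ μ' i) (hle : ∀ j, μ' j ≤ μ j) :
    rankG e (f - μ') = rankG e f - ∑ i, μ' i := by
  have hlow := rank_sub_ge hn e hloop f μ' hμ'
  have h2 := rank_sub_ge hn e hloop (f - μ') (μ - μ')
    (fun i => by simpa using sub_nonneg.mpr (hle i))
  have heq : f - μ' - (μ - μ') = f - μ := by ring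
  rw [heq] at h2
  have hsum : ∑ i, (μ - μ') i = ∑ i, μ i - ∑ i, μ' i := by
    simp [Finset.sum_sub_distrib]
  rw [hsum, hrank] at h2
  omega
end

section
/- On the complete graph K_n, let f be an L_G-effective parking configuration with f_i = 0 for some i < n. Then rho(f) = rho(f - epsilon^(i)) + 1, where epsilon^(i) is the configuration with 1 at coordinate i and 0 elsewhere. -/
/-- Edge multiplicities of the complete graph `K n`. -/
def eK (n : ℕ) : Fin n → Fin n → ℕ := fun i j => if i = j then 0 else 1

/-- Parking configuration on `K n` (with sink `n`, the last vertex). -/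
def parkingK {n : ℕ} (f : Fin n → ℤ) : Prop :=
  (∀ i : Fin n, (i : ℕ) < n - 1 → 0 ≤ f i) ∧
    ∀ Y : Finset (Fin n), Y.Nonempty → (∀ i ∈ Y, (i : ℕ) < n - 1) →
      ∃ k ∈ Y, f k < (n : ℤ) - (Y.card : ℤ)

lemma sum_eK_row {n : ℕ} (j : Fin n) :
    ∑ k, (eK n j k : ℤ) = (n : ℤ) - 1 := by
  have h : ∀ k : Fin n, (eK n j k : ℤ) = 1 - (if k = j then 1 else 0) := by
    intro k
    by_cases h : k = j
    · simp [eK, h]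
    · have h1 : eK n j k = 1 := by
        unfold eK
        rw [if_neg (fun h' => h h'.symm)]
      rw [h1, if_neg h]
      norm_num
  rw [Finset.sum_congr rfl fun k _ => h k, Finset.sum_sub_distrib]
  simp [Finset.card_univ]

lemma lapK_apply {n : ℕ} (j m : Fin n) :
    lapG (eK n) j m = if m = j then (n:ℤ) - 1 else -1 := by
  unfold lapG
  by_cases h : m = j
  · simp [h, sum_eK_row]
  · rw [if_neg h, if_neg h]
    have h2 : eK n j m = 1 := by
      unfold eK
      rw [if_neg (fun h' => h h'.symm)]
    rw [h2]; norm_num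

lemma lat_apply {n : ℕ} (a : Fin n → ℤ) (m : Fin n) :
    (∑ j, a j • lapG (eK n) j) m = (n:ℤ) * a m - ∑ j, a j := by
  rw [Finset.sum_apply]
  have h : ∀ j : Fin n, (a j • lapG (eK n) j) m
      = (if m = j then a j * (n:ℤ) else 0) - a j := by
    intro j
    rw [Pi.smul_apply, smul_eq_mul, lapK_apply]
    by_cases h : m = j
    · simp [h]
      ring
    · simp [h]
  rw [Finset.sum_congr rfl fun j _ => h j, Finset.sum_sub_distrib, Finset.sum_ite_eq]
  simp [mul_comm]

lemma topK_iff_s13 {n : ℕ} (x y : Fin n → ℤ) :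
    topG (eK n) x y ↔ ∃ a : Fin n → ℤ, ∀ m, x m - y m = (n:ℤ) * a m - ∑ j, a j := by
  constructor
  · rintro ⟨a, ha⟩
    refine ⟨a, fun m => ?_⟩
    have := congrFun ha m
    rw [Pi.sub_apply] at this
    rw [this, lat_apply]
  · rintro ⟨a, ha⟩
    refine ⟨a, funext fun m => ?_⟩
    rw [Pi.sub_apply, ha m, lat_apply]

lemma topK_sum {n : ℕ} (x y : Fin n → ℤ) (h : topG (eK n) x y) :
    ∑ m, x m = ∑ m, y m := by
  rw [topK_iff_s13] at h
  obtain ⟨a, ha⟩ := h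
  have h2 : ∑ m, (x m - y m) = ∑ m : Fin n, ((n:ℤ) * a m - ∑ j, a j) :=
    Finset.sum_congr rfl fun m _ => ha m
  rw [Finset.sum_sub_distrib, Finset.sum_sub_distrib, ← Finset.mul_sum,
    Finset.sum_const, Finset.card_univ, Fintype.card_fin, nsmul_eq_mul] at h2
  linarith

lemma effK_nonneg_sum {n : ℕ} (x : Fin n → ℤ) (h : effG (eK n) x) : 0 ≤ ∑ m, x m := by
  obtain ⟨g, htop, hg⟩ := h
  rw [topK_sum x g htop]
  exact Finset.sum_nonneg fun m _ => hg m

lemma effK_of_nonneg {n : ℕ} (x : Fin n → ℤ) (h : ∀ m, 0 ≤ x m) : effG (eK n) x :=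
  ⟨x, ⟨fun _ => 0, by simp⟩, h⟩

lemma effK_crit {n : ℕ} (hn : 1 ≤ n) (x : Fin n → ℤ) (h : effG (eK n) x) :
    ∃ c : ℤ, ∑ m, (x m + c) % (n:ℤ) ≤ ∑ m, x m := by
  obtain ⟨g, htop, hg⟩ := h
  have hs := topK_sum x g htop
  rw [topK_iff_s13] at htop
  obtain ⟨a, ha⟩ := htop
  refine ⟨∑ j, a j, ?_⟩
  have hnZ : (0:ℤ) < (n:ℤ) := by exact_mod_cast hn
  have key : ∀ m, (x m + ∑ j, a j) % (n:ℤ) ≤ g m := by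
    intro m
    have h1 : x m + ∑ j, a j = g m + (n:ℤ) * a m := by have := ha m; linarith
    rw [h1, Int.add_mul_emod_self_left]
    have h2 : 0 ≤ g m := hg m
    have h3 : 0 ≤ g m / (n:ℤ) := Int.ediv_nonneg h2 (le_of_lt hnZ)
    calc g m % (n:ℤ) = g m - (n:ℤ) * (g m / (n:ℤ)) := by rw [Int.emod_def]
      _ ≤ g m := by nlinarith
  calc ∑ m, (x m + ∑ j, a j) % (n:ℤ) ≤ ∑ m, g m := Finset.sum_le_sum fun m _ => key m
    _ = ∑ m, x m := hs.symm

lemma effK_comp {n : ℕ} (σ : Equiv.Perm (Fin n)) (x : Fin n → ℤ) :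
    effG (eK n) (x ∘ σ) ↔ effG (eK n) x := by
  have main : ∀ (τ : Equiv.Perm (Fin n)) (y : Fin n → ℤ),
      effG (eK n) y → effG (eK n) (y ∘ τ) := by
    rintro τ y ⟨g, htop, hg⟩
    rw [topK_iff_s13] at htop
    obtain ⟨a, ha⟩ := htop
    refine ⟨g ∘ τ, ?_, fun m => hg _⟩
    rw [topK_iff_s13]
    refine ⟨a ∘ τ, fun m => ?_⟩
    have h1 := ha (τ m)
    have hsum : ∑ j, a (τ j) = ∑ j, a j := Equiv.sum_comp τ a
    simp only [Function.comp_apply]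
    rw [hsum]
    exact h1
  constructor
  · intro h
    have h2 := main σ⁻¹ _ h
    have hxx : (x ∘ σ) ∘ (σ⁻¹ : Equiv.Perm (Fin n)) = x := by
      funext m; simp
    rwa [hxx] at h2
  · exact main σ x

lemma parking_ub {n : ℕ} (f : Fin n → ℤ) (hp : parkingK f) (j : Fin n)
    (hj : (j:ℕ) < n - 1) : f j < (n:ℤ) - 1 := by
  obtain ⟨k, hk, hlt⟩ := hp.2 {j} ⟨j, Finset.mem_singleton_self j⟩
    (by intro x hx; rw [Finset.mem_singleton] at hx; subst hx; exact hj)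
  rw [Finset.mem_singleton] at hk
  subst hk
  simpa using hlt

lemma sink_nonneg {n : ℕ} (hn : 2 ≤ n) (f : Fin n → ℤ) (hp : parkingK f)
    (he : effG (eK n) f) : 0 ≤ f ⟨n - 1, by omega⟩ := by
  have hn1 : 1 ≤ n := by omega
  have hnZ : (0:ℤ) < (n:ℤ) := by exact_mod_cast hn1
  obtain ⟨c, hc⟩ := effK_crit hn1 f he
  set s : Fin n := ⟨n - 1, by omega⟩ with hsdef
  set c' := c % (n:ℤ) with hc'
  have h0c : 0 ≤ c' := Int.emod_nonneg c (ne_of_gt hnZ)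
  have hcn : c' < (n:ℤ) := Int.emod_lt_of_pos c hnZ
  have hrw : ∀ m : Fin n, (f m + c) % (n:ℤ) = (f m + c') % (n:ℤ) := by
    intro m
    conv_lhs => rw [Int.add_emod]
    conv_rhs => rw [Int.add_emod]
    rw [hc', Int.emod_emod_of_dvd c dvd_rfl]
  rw [Finset.sum_congr rfl (fun m _ => hrw m)] at hc
  rw [← Finset.sum_erase_add Finset.univ _ (Finset.mem_univ s),
    ← Finset.sum_erase_add Finset.univ f (Finset.mem_univ s)] at hc
  have hEns : ∀ j ∈ Finset.univ.erase s, (j:ℕ) < n - 1 := by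
    intro j hj
    have hne := Finset.ne_of_mem_erase hj
    have h1 : (j:ℕ) < n := j.isLt
    have h2 : (j:ℕ) ≠ n - 1 := fun h => hne (Fin.ext (by rw [h]))
    omega
  have hfub : ∀ j ∈ Finset.univ.erase s, f j < (n:ℤ) - 1 :=
    fun j hj => parking_ub f hp j (hEns j hj)
  have hflb : ∀ j ∈ Finset.univ.erase s, 0 ≤ f j := fun j hj => hp.1 j (hEns j hj)
  have hmodnn : 0 ≤ (f s + c') % (n:ℤ) := Int.emod_nonneg _ (ne_of_gt hnZ)
  by_cases hz : c' = 0
  · have heq : ∀ j ∈ Finset.univ.erase s, (f j + c') % (n:ℤ) = f j := by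
      intro j hj
      rw [hz, add_zero]
      exact Int.emod_eq_of_lt (hflb j hj) (by have := hfub j hj; linarith)
    rw [Finset.sum_congr rfl heq] at hc
    linarith
  · have h1c : 1 ≤ c' := by omega
    set Y := (Finset.univ.erase s).filter (fun j => (n:ℤ) ≤ f j + c') with hYdef
    have hYc : (Y.card : ℤ) ≤ c' - 1 := by
      rcases Finset.eq_empty_or_nonempty Y with h | h
      · rw [h]; simp; omega
      · obtain ⟨k, hkY, hklt⟩ := hp.2 Y h
          (fun j hj => hEns j (Finset.mem_of_mem_filter j hj))
        have hk2 : (n:ℤ) ≤ f k + c' := (Finset.mem_filter.mp hkY).2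
        linarith
    have hterm : ∀ j ∈ Finset.univ.erase s, (f j + c') % (n:ℤ)
        = f j + c' - (n:ℤ) * (if (n:ℤ) ≤ f j + c' then 1 else 0) := by
      intro j hj
      by_cases hle : (n:ℤ) ≤ f j + c'
      · rw [if_pos hle, mul_one]
        have heq2 : f j + c' = (f j + c' - n) + (n:ℤ) * 1 := by ring
        have h3 : (f j + c') % (n:ℤ) = (f j + c' - n) % (n:ℤ) := by
          conv_lhs => rw [heq2]
          rw [Int.add_mul_emod_self_left]
        rw [h3]
        exact Int.emod_eq_of_lt (show (0:ℤ) ≤ f j + c' - n by linarith)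
          (show f j + c' - (n:ℤ) < (n:ℤ) by have := hfub j hj; linarith)
      · rw [if_neg hle, mul_zero, sub_zero]
        exact Int.emod_eq_of_lt (by have := hflb j hj; linarith)
          (by linarith [not_le.mp hle])
    rw [Finset.sum_congr rfl hterm, Finset.sum_sub_distrib] at hc
    have hsum2 : ∑ j ∈ Finset.univ.erase s,
        (n:ℤ) * (if (n:ℤ) ≤ f j + c' then 1 else 0) = (n:ℤ) * (Y.card:ℤ) := by
      rw [← Finset.mul_sum]
      congr 1
      rw [Finset.sum_boole]
    have hsum1 : ∑ j ∈ Finset.univ.erase s, (f j + c')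
        = (∑ j ∈ Finset.univ.erase s, f j) + ((n:ℤ) - 1) * c' := by
      rw [Finset.sum_add_distrib, Finset.sum_const]
      have hcard : (Finset.univ.erase s).card = n - 1 := by
        rw [Finset.card_erase_of_mem (Finset.mem_univ s), Finset.card_univ,
          Fintype.card_fin]
      rw [hcard, nsmul_eq_mul]
      congr 1
      push_cast [Nat.cast_sub hn1]
      ring
    rw [hsum1, hsum2] at hc
    have hmul : (n:ℤ) * (Y.card:ℤ) ≤ (n:ℤ) * (c' - 1) :=
      mul_le_mul_of_nonneg_left hYc (le_of_lt hnZ)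
    linarith

theorem stmt13 (n : ℕ) (hn : 2 ≤ n) (f : Fin n → ℤ)
    (hpark : parkingK f) (heff : effG (eK n) f)
    (i : Fin n) (hi : (i : ℕ) < n - 1) (hfi : f i = 0) :
    rankG (eK n) f =
      rankG (eK n) (f - fun j => if j = i then 1 else 0) + 1 := by
  have hn1 : 1 ≤ n := by omega
  have hnZ : (0:ℤ) < (n:ℤ) := by exact_mod_cast hn1
  set eps : Fin n → ℤ := fun j => if j = i then 1 else 0 with hepsdef
  have hsum_eps : ∑ j, eps j = 1 := by
    rw [hepsdef]
    simp
  set A := {d : ℤ | ∃ lam : Fin n → ℤ,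
    (∀ m, 0 ≤ lam m) ∧ (∑ m, lam m) = d ∧ ¬ effG (eK n) (f - lam)} with hA
  set B := {d : ℤ | ∃ lam : Fin n → ℤ,
    (∀ m, 0 ≤ lam m) ∧ (∑ m, lam m) = d ∧ ¬ effG (eK n) ((f - eps) - lam)} with hB
  have hr1 : rankG (eK n) f = sInf A - 1 := rfl
  have hr2 : rankG (eK n) (f - eps) = sInf B - 1 := rfl
  have hbig : ∀ x : Fin n → ℤ, {d : ℤ | ∃ lam : Fin n → ℤ,
      (∀ m, 0 ≤ lam m) ∧ (∑ m, lam m) = d ∧ ¬ effG (eK n) (x - lam)}.Nonempty := by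
    intro x
    set M : ℤ := |∑ m, x m| + 1 with hM
    have hM0 : 0 ≤ M := by positivity
    refine ⟨(n:ℤ) * M, fun _ => M, fun m => hM0, ?_, ?_⟩
    · rw [Finset.sum_const, Finset.card_univ, Fintype.card_fin, nsmul_eq_mul]
    · intro hcon
      have hnn := effK_nonneg_sum _ hcon
      simp only [Pi.sub_apply] at hnn
      rw [Finset.sum_sub_distrib, Finset.sum_const, Finset.card_univ,
        Fintype.card_fin, nsmul_eq_mul] at hnn
      have h1 : (1:ℤ) * M ≤ (n:ℤ) * M := by
        apply mul_le_mul_of_nonneg_right _ hM0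
        exact_mod_cast hn1
      have h2 : ∑ m, x m ≤ |∑ m, x m| := le_abs_self _
      linarith
  have hAne : A.Nonempty := hbig f
  have hBne : B.Nonempty := hbig (f - eps)
  have hAbdd : BddBelow A := by
    refine ⟨0, fun d hd => ?_⟩
    obtain ⟨lam, h1, h2, _⟩ := hd
    rw [← h2]
    exact Finset.sum_nonneg fun m _ => h1 m
  have hBbdd : BddBelow B := by
    refine ⟨0, fun d hd => ?_⟩
    obtain ⟨lam, h1, h2, _⟩ := hd
    rw [← h2]
    exact Finset.sum_nonneg fun m _ => h1 m
  have heps_nn : ∀ j, 0 ≤ eps j := by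
    intro j
    rw [hepsdef]
    dsimp only
    split <;> norm_num
  have step2 : ∀ d ∈ B, d + 1 ∈ A := by
    rintro d ⟨lam, h1, h2, h3⟩
    refine ⟨fun j => lam j + eps j, fun j => add_nonneg (h1 j) (heps_nn j), ?_, ?_⟩
    · rw [Finset.sum_add_distrib, h2, hsum_eps]
    · have heq : (f - fun j => lam j + eps j) = (f - eps) - lam := by
        funext j
        simp only [Pi.sub_apply]
        ring
      rw [heq]
      exact h3
  have step3 : ∀ d ∈ A, d - 1 ∈ B := by
    rintro d ⟨lam, h1, h2, h3⟩
    by_cases hli : 1 ≤ lam i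
    · refine ⟨fun j => lam j - eps j, ?_, ?_, ?_⟩
      · intro j
        rw [hepsdef]
        dsimp only
        by_cases hj : j = i
        · rw [if_pos hj, hj]
          linarith
        · rw [if_neg hj]
          linarith [h1 j]
      · rw [Finset.sum_sub_distrib, h2, hsum_eps]
      · have heq : ((f - eps) - fun j => lam j - eps j) = f - lam := by
          funext j
          simp only [Pi.sub_apply]
          ring
        rw [heq]
        exact h3
    · have hlami : lam i = 0 := le_antisymm (by linarith [not_le.mp hli]) (h1 i)
      have hex : ∃ k, f k < lam k := by
        by_contra hcon
        push_neg at hcon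
        refine h3 (effK_of_nonneg _ fun m => ?_)
        simp only [Pi.sub_apply]
        linarith [hcon m]
      obtain ⟨k, hk⟩ := hex
      have hfk : 0 ≤ f k := by
        by_cases hks : (k:ℕ) < n - 1
        · exact hpark.1 k hks
        · have hkv : (k:ℕ) = n - 1 := by have := k.isLt; omega
          have hkk : k = ⟨n - 1, by omega⟩ := Fin.ext hkv
          rw [hkk]
          exact sink_nonneg hn f hpark heff
      have hik : i ≠ k := by
        intro h
        rw [← h, hfi, hlami] at hk
        exact lt_irrefl 0 hk
      set μ : Fin n → ℤ :=
        fun j => if j = i then lam k - f k else if j = k then f k else lam j with hμ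
      have hswap : f - μ = (f - lam) ∘ (Equiv.swap i k) := by
        funext j
        simp only [Function.comp_apply, Pi.sub_apply, hμ]
        by_cases hj : j = i
        · subst hj
          rw [Equiv.swap_apply_left, if_pos rfl, hfi]
          ring
        · by_cases hj' : j = k
          · subst hj'
            rw [Equiv.swap_apply_right, if_neg hj, if_pos rfl, hfi, hlami]
            ring
          · rw [Equiv.swap_apply_of_ne_of_ne hj hj', if_neg hj, if_neg hj']
      have hμne : ¬ effG (eK n) (f - μ) := by
        rw [hswap]
        intro hcon
        exact h3 ((effK_comp (Equiv.swap i k) (f - lam)).mp hcon)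
      have hμsum : ∑ j, μ j = d := by
        have hμj : ∀ j, μ j = lam j +
            ((if j = i then lam k - f k else 0) + (if j = k then f k - lam k else 0)) := by
          intro j
          rw [hμ]
          dsimp only
          by_cases hj : j = i
          · subst hj
            rw [if_pos rfl, if_pos rfl, if_neg hik, hlami]
            ring
          · by_cases hj' : j = k
            · subst hj'
              rw [if_neg hj, if_pos rfl, if_neg hj, if_pos rfl]
              ring
            · rw [if_neg hj, if_neg hj', if_neg hj, if_neg hj']
              ring
        rw [Finset.sum_congr rfl fun j _ => hμj j, Finset.sum_add_distrib,
          Finset.sum_add_distrib, h2]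
        rw [Finset.sum_ite_eq' Finset.univ i (fun _ => lam k - f k),
          Finset.sum_ite_eq' Finset.univ k (fun _ => f k - lam k)]
        simp
      refine ⟨fun j => μ j - eps j, ?_, ?_, ?_⟩
      · intro j
        rw [hepsdef]
        dsimp only
        by_cases hj : j = i
        · rw [if_pos hj, hj, hμ]
          dsimp only
          rw [if_pos rfl]
          linarith
        · rw [if_neg hj, sub_zero, hμ]
          dsimp only
          rw [if_neg hj]
          by_cases hj' : j = k
          · rw [if_pos hj']
            exact hfk
          · rw [if_neg hj']
            exact h1 j
      · rw [Finset.sum_sub_distrib, hμsum, hsum_eps]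
      · have heq : ((f - eps) - fun j => μ j - eps j) = f - μ := by
          funext j
          simp only [Pi.sub_apply]
          ring
        rw [heq]
        exact hμne
  have hAmem := Int.csInf_mem hAne hAbdd
  have hBmem := Int.csInf_mem hBne hBbdd
  have hle1 : sInf B ≤ sInf A - 1 := csInf_le hBbdd (step3 _ hAmem)
  have hle2 : sInf A ≤ sInf B + 1 := csInf_le hAbdd (step2 _ hBmem)
  rw [hr1, hr2]
  linarith
end

section
/- For any word w in D_n, the word Phi(w) := reverse(u) reverse(v), where w = uv and u is the longest prefix of w attaining the maximal value of delta among all prefixes, is again in D_n, and Phi is an involution: Phi(Phi(w)) = w. -/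
/-- Number of occurrences of the letter `a` (encoded `true`). -/
def countA (w : List Bool) : ℕ := (w.filter (fun x => x = true)).length

/-- Number of occurrences of the letter `b` (encoded `false`). -/
def countB (w : List Bool) : ℕ := (w.filter (fun x => x = false)).length

/-- `delta w = |w|_a - |w|_b`. -/
def delta (w : List Bool) : ℤ := (countA w : ℤ) - (countB w : ℤ)

/-- `D_n`: words with `n-1` a's, `n` b's, every strict prefix with `delta ≥ 0`. -/
def inDn (n : ℕ) (w : List Bool) : Prop :=
  countA w = n - 1 ∧ countB w = n ∧
    ∀ u v : List Bool, w = u ++ v → v ≠ [] → 0 ≤ delta u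

/-!
Let `u` be the longest prefix of `w = u v` maximising `delta`, and write `x̃` for reversal.
For `n ≥ 1`, `delta w = -1` and `delta u ≥ 0`. A prefix of `Φ(w) = ũ ṽ` either extends `ũ` by
some `a ≠ []`, and then `delta a < 0` because `u ã` is a strict prefix of `w`; or it is a prefix
`p` of `ũ`, and then `delta p ≤ delta u` because `u = c̃ p̃` with `c̃` a prefix of `w`. So `ũ` is
again the longest maximising prefix of `Φ(w)`, and `Φ` is an involution. Membership of `Φ(w)` in
`D_n` uses the same two cases, together with the fact that every nonempty factor directly after
`u` in `w` has negative `delta`.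
-/

lemma countA_append (x y : List Bool) : countA (x ++ y) = countA x + countA y := by
  simp [countA, List.filter_append]

lemma countB_append (x y : List Bool) : countB (x ++ y) = countB x + countB y := by
  simp [countB, List.filter_append]

lemma countA_reverse (x : List Bool) : countA x.reverse = countA x := by
  simp [countA, List.filter_reverse]

lemma countB_reverse (x : List Bool) : countB x.reverse = countB x := by
  simp [countB, List.filter_reverse]

lemma countA_add_countB (w : List Bool) : countA w + countB w = w.length := by
  induction w with
  | nil => rfl
  | cons x t ih => cases x <;> simp [countA, countB] at * <;> omega

@[simp] lemma delta_nil : delta [] = 0 := rfl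

lemma delta_append (x y : List Bool) : delta (x ++ y) = delta x + delta y := by
  simp only [delta, countA_append, countB_append]; push_cast; ring

@[simp] lemma delta_reverse (x : List Bool) : delta x.reverse = delta x := by
  simp [delta, countA_reverse, countB_reverse]

lemma eq_nil_of_inDn_zero {w : List Bool} (h : inDn 0 w) : w = [] := by
  have := countA_add_countB w
  exact List.length_eq_zero_iff.mp (by rw [h.1, h.2.1] at this; omega)

lemma neg_one_le_delta_of_inDn {n : ℕ} {w : List Bool} (h : inDn n w) : -1 ≤ delta w := by
  simp only [delta, h.1, h.2.1]; omega

lemma delta_neg_of_inDn {n : ℕ} {w : List Bool} (hn : 0 < n) (h : inDn n w) : delta w < 0 := by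
  simp only [delta, h.1, h.2.1]; omega

/-- `u` is the longest prefix of `w` maximising `delta`; that `u` is a prefix of `w` is
assumed separately where needed. -/
def IsLastArgmaxDelta (w u : List Bool) : Prop :=
  ∀ u' v' : List Bool, w = u' ++ v' →
    delta u' ≤ delta u ∧ (delta u' = delta u → u'.length ≤ u.length)

namespace IsLastArgmaxDelta

variable {w u v : List Bool}

lemma delta_nonneg (h : IsLastArgmaxDelta w u) : 0 ≤ delta u := by
  simpa using (h [] w rfl).1

lemma delta_neg_of_append {t r : List Bool} (h : IsLastArgmaxDelta (u ++ (t ++ r)) u)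
    (ht : t ≠ []) : delta t < 0 := by
  obtain ⟨hle, hlen⟩ := h (u ++ t) r (List.append_assoc u t r).symm
  rw [delta_append] at hle hlen
  refine lt_of_le_of_ne (by linarith) fun ht0 => ht ?_
  have := hlen (by rw [ht0, add_zero])
  rw [List.length_append] at this
  exact List.length_eq_zero_iff.mp (by omega)

lemma append_eq_append {u₂ v₂ : List Bool} (h : IsLastArgmaxDelta w u)
    (h₂ : IsLastArgmaxDelta w u₂) (hw : w = u ++ v) (hw₂ : w = u₂ ++ v₂) :
    u = u₂ ∧ v = v₂ := by
  obtain ⟨hle, hlen⟩ := h u₂ v₂ hw₂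
  obtain ⟨hle₂, hlen₂⟩ := h₂ u v hw
  have hdelta := le_antisymm hle hle₂
  exact List.append_inj (hw.symm.trans hw₂) (le_antisymm (hlen₂ hdelta.symm) (hlen hdelta))

end IsLastArgmaxDelta

section Reverse

variable {u v p q : List Bool}

lemma exists_of_reverse_append_reverse_eq_append (h : u.reverse ++ v.reverse = p ++ q) :
    (∃ a : List Bool, p = u.reverse ++ a ∧ v = q.reverse ++ a.reverse) ∨
      ∃ c : List Bool, u = c.reverse ++ p.reverse := by
  rcases List.append_eq_append_iff.mp h with ⟨a, hp, hv⟩ | ⟨c, hu, -⟩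
  · exact .inl ⟨a, hp, by simpa using congrArg List.reverse hv⟩
  · exact .inr ⟨c, by simpa using congrArg List.reverse hu⟩

lemma isLastArgmaxDelta_reverse_append_reverse
    (hpre : ∀ x y, u ++ v = x ++ y → y ≠ [] → 0 ≤ delta x) (hneg : delta (u ++ v) < 0)
    (hmax : IsLastArgmaxDelta (u ++ v) u) :
    IsLastArgmaxDelta (u.reverse ++ v.reverse) u.reverse := by
  intro p q hpq
  rw [delta_reverse]
  rcases exists_of_reverse_append_reverse_eq_append hpq with ⟨a, rfl, rfl⟩ | ⟨c, rfl⟩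
  · rcases eq_or_ne a [] with rfl | ha
    · simp
    · have hprefix := hpre (u ++ q.reverse) a.reverse (by simp) (by simpa using ha)
      rw [← List.append_assoc, delta_append, delta_reverse] at hneg
      rw [delta_append, delta_reverse]
      exact ⟨by linarith, fun _ => by linarith⟩
  · refine ⟨?_, fun _ => by simp⟩
    rw [delta_append, delta_reverse, delta_reverse]
    suffices 0 ≤ delta c by linarith
    rcases eq_or_ne p [] with rfl | hp
    · simpa using hmax.delta_nonneg
    · simpa using hpre c.reverse (p.reverse ++ v) (by simp) (by simp [hp])

lemma inDn_reverse_append_reverse {n : ℕ} (hin : inDn n (u ++ v))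
    (hmax : IsLastArgmaxDelta (u ++ v) u) : inDn n (u.reverse ++ v.reverse) := by
  have hlow := neg_one_le_delta_of_inDn hin
  obtain ⟨hA, hB, -⟩ := hin
  refine ⟨?_, ?_, fun p q hpq hq => ?_⟩
  · rwa [countA_append, countA_reverse, countA_reverse, ← countA_append]
  · rwa [countB_append, countB_reverse, countB_reverse, ← countB_append]
  rcases exists_of_reverse_append_reverse_eq_append hpq with ⟨a, rfl, rfl⟩ | ⟨c, rfl⟩
  · have hq : delta q < 0 := by
      simpa using hmax.delta_neg_of_append (by simpa using hq)
    simp only [delta_append, delta_reverse] at hlow ⊢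
    linarith
  · have := (hmax c.reverse (p.reverse ++ v) (by simp)).1
    simp only [delta_append, delta_reverse] at this ⊢
    linarith

end Reverse

theorem stmt16 (n : ℕ) (w u v : List Bool) (hw : w = u ++ v) (hin : inDn n w)
    (hmax : ∀ u' v' : List Bool, w = u' ++ v' →
      delta u' ≤ delta u ∧ (delta u' = delta u → u'.length ≤ u.length)) :
    inDn n (u.reverse ++ v.reverse) ∧
      ∀ u2 v2 : List Bool, u.reverse ++ v.reverse = u2 ++ v2 →
        (∀ u' v' : List Bool, u.reverse ++ v.reverse = u' ++ v' →
          delta u' ≤ delta u2 ∧ (delta u' = delta u2 → u'.length ≤ u2.length)) →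
        u2.reverse ++ v2.reverse = w := by
  subst hw
  refine ⟨inDn_reverse_append_reverse hin hmax, fun u₂ v₂ h₂ hmax₂ => ?_⟩
  obtain rfl | hn := Nat.eq_zero_or_pos n
  · obtain ⟨rfl, rfl⟩ := List.append_eq_nil_iff.mp (eq_nil_of_inDn_zero hin)
    obtain ⟨rfl, rfl⟩ := List.append_eq_nil_iff.mp h₂.symm
    rfl
  have hrev := isLastArgmaxDelta_reverse_append_reverse hin.2.2 (delta_neg_of_inDn hn hin) hmax
  obtain ⟨rfl, rfl⟩ := hrev.append_eq_append hmax₂ rfl h₂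
  simp
end
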